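/- arXiv:2502.16734 — 9 statements merged into one kernel-verified Lean document; each statement's English description precedes it below -/
import Mathlib

section
/- Let E be a real normed vector space (the state space), A a nonempty finite set, Q* : E → A → ℝ, and ε > 0. Define S_nu := {s : Argmax(Q*, s) is not a singleton}; S' := {s : for some a ∈ A, x ↦ Q*(x, a) is not continuous at s}; S_n := {s : for every ε₁ > 0 there exists s' with ‖s' − s‖ ≤ ε₁ and Argmax(Q*, s') ≠ Argmax(Q*, s)}; S₀ := S_n ∩ S'; and S_nin := {s : B_ε(s) ≠ B*_ε(s)}. Then S_nin ⊆ (S_nu ∪ S₀) + B_ε; that is, for every s ∈ S_nin there exists y ∈ S_nu ∪ S₀ with ‖s − y‖ ≤ ε. -/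
/-!
If the `ε`-ball around `s` contains a state `s'` whose argmax set differs from that of `s`, then
on the segment `[s, s']`, which is connected and stays in the ball, there is a point `y` of the
frontier of `{x | Amax Q x = Amax Q s}`. Near `y` the argmax set is not locally constant, so
`y ∈ S_n`. If moreover `Amax Q y = {a₀}` and every `Q · a` were continuous at `y`, the strict
inequalities `Q y a < Q y a₀` would persist near `y` and the argmax set would be locally constant;
hence `y ∈ S_nu` or `y ∈ S'`.
-/

/-- The argmax set of a `Q`-function at a state `x`. -/
def Amax {X A : Type*} (Q : X → A → ℝ) (x : X) : Set A :=
  {a | ∀ a', Q x a' ≤ Q x a}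

open Set Filter Topology

theorem IsPreconnected.inter_frontier_nonempty {X : Type*} [TopologicalSpace X] {s t : Set X}
    (hs : IsPreconnected s) (hst : (s ∩ t).Nonempty) (hsdt : (s \ t).Nonempty) :
    (s ∩ frontier t).Nonempty := by
  by_contra h
  have interior_of_closure : ∀ x ∈ s, x ∈ closure t → x ∈ interior t :=
    fun x hxs hxc => by_contra fun hxi => h ⟨x, hxs, hxc, hxi⟩
  obtain ⟨x, hxs, hxt⟩ := hst
  have hsub : s ⊆ interior t :=
    hs.subset_of_closure_inter_subset isOpen_interior
      ⟨x, hxs, interior_of_closure x hxs (subset_closure hxt)⟩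
      fun z ⟨hzc, hzs⟩ => interior_of_closure z hzs (closure_mono interior_subset hzc)
  obtain ⟨z, hzs, hzt⟩ := hsdt
  exact hzt (interior_subset (hsub hzs))

theorem not_eventually_eq_of_mem_frontier {X Y : Type*} [TopologicalSpace X] {f : X → Y} {c : Y}
    {y : X} (hy : y ∈ frontier {x | f x = c}) : ¬ ∀ᶠ x in 𝓝 y, f x = f y := by
  intro h
  by_cases hc : f y = c
  · exact hy.2 (mem_interior_iff_mem_nhds.2 (h.mono fun x hx => hx.trans hc))
  · obtain ⟨x, hxy, hxc⟩ := mem_closure_iff_nhds.1 hy.1 _ h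
    exact hc (hxy.symm.trans hxc)

theorem exists_norm_sub_le_ne_of_not_eventually_eq {E Y : Type*} [SeminormedAddCommGroup E]
    {f : E → Y} {y : E} (h : ¬ ∀ᶠ x in 𝓝 y, f x = f y) :
    ∀ δ > (0 : ℝ), ∃ x, ‖x - y‖ ≤ δ ∧ f x ≠ f y := by
  intro δ hδ
  by_contra! hne
  exact h (mem_of_superset (Metric.closedBall_mem_nhds y hδ) fun x hx =>
    hne x (mem_closedBall_iff_norm.1 hx))

theorem amax_eq_singleton_iff {X A : Type*} {Q : X → A → ℝ} {x : X} {a₀ : A} :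
    Amax Q x = {a₀} ↔ ∀ a ≠ a₀, Q x a < Q x a₀ := by
  constructor
  · intro h a ha
    by_contra! hle
    have ha₀ : a₀ ∈ Amax Q x := h ▸ rfl
    have hmem : a ∈ Amax Q x := fun a' => (ha₀ a').trans hle
    rw [h] at hmem
    exact ha hmem
  · intro h
    ext a
    simp only [Amax, mem_ofPred_eq, mem_singleton_iff]
    refine ⟨fun ha => ?_, ?_⟩
    · by_contra hne
      exact (h a hne).not_ge (ha a₀)
    · rintro rfl a'
      rcases eq_or_ne a' a with rfl | hne
      · exact le_rfl
      · exact (h a' hne).le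

theorem eventually_amax_eq_singleton {X A : Type*} [TopologicalSpace X] [Finite A]
    {Q : X → A → ℝ} {y : X} {a₀ : A} (hQ : ∀ a, ContinuousAt (fun x => Q x a) y)
    (hy : Amax Q y = {a₀}) : ∀ᶠ x in 𝓝 y, Amax Q x = {a₀} := by
  simp only [amax_eq_singleton_iff] at hy ⊢
  refine eventually_all.2 fun a => ?_
  rcases eq_or_ne a a₀ with rfl | ha
  · exact .of_forall fun _ h => (h rfl).elim
  · exact ((hQ a).eventually_lt (hQ a₀) (hy a ha)).mono fun _ hx _ => hx

theorem stmt1_general {E : Type*} [NormedAddCommGroup E] [NormedSpace ℝ E]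
    {A : Type*} [Fintype A]
    (Q : E → A → ℝ) (ε : ℝ)
    (Snu Sd Sn S0 Snin : Set E)
    (hSnu : Snu = {s | ¬ ∃ a₀, Amax Q s = {a₀}})
    (hSd : Sd = {s | ∃ a, ¬ ContinuousAt (fun x => Q x a) s})
    (hSn : Sn = {s | ∀ ε₁ > (0:ℝ), ∃ s', ‖s' - s‖ ≤ ε₁ ∧ Amax Q s' ≠ Amax Q s})
    (hS0 : S0 = Sn ∩ Sd)
    (hSnin : Snin = {s | {s' | ‖s' - s‖ ≤ ε} ≠ {s' | ‖s' - s‖ ≤ ε ∧ Amax Q s' = Amax Q s}}) :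
    ∀ s ∈ Snin, ∃ y ∈ Snu ∪ S0, ‖s - y‖ ≤ ε := by
  subst hSnu hSd hSn hS0 hSnin
  intro s hs
  obtain ⟨s', hs'ε, hs'ne⟩ : ∃ s', ‖s' - s‖ ≤ ε ∧ Amax Q s' ≠ Amax Q s := by
    by_contra! h
    exact hs (ext fun x => ⟨fun hx => ⟨hx, h x hx⟩, And.left⟩)
  obtain ⟨y, hy_seg, hy_fr⟩ := (convex_segment s s').isPreconnected.inter_frontier_nonempty
    (t := {x | Amax Q x = Amax Q s})
    ⟨s, left_mem_segment ℝ s s', rfl⟩ ⟨s', right_mem_segment ℝ s s', hs'ne⟩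
  have hsy : ‖s - y‖ ≤ ε := by
    have hball : segment ℝ s s' ⊆ Metric.closedBall s ε :=
      (convex_closedBall s ε).segment_subset
        (Metric.mem_closedBall_self ((norm_nonneg _).trans hs'ε))
        (mem_closedBall_iff_norm.2 hs'ε)
    exact mem_closedBall_iff_norm'.1 (hball hy_seg)
  have hy_var := not_eventually_eq_of_mem_frontier hy_fr
  refine ⟨y, ?_, hsy⟩
  by_cases hu : ∃ a₀, Amax Q y = {a₀}
  · obtain ⟨a₀, ha₀⟩ := hu
    refine Or.inr
      ⟨exists_norm_sub_le_ne_of_not_eventually_eq hy_var, not_forall.1 fun hcont => ?_⟩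
    exact hy_var ((eventually_amax_eq_singleton hcont ha₀).mono fun x hx => hx.trans ha₀.symm)
  · exact Or.inl hu

/-- Sparse difference between intrinsic and standard state neighborhoods:
every state whose `ε`-neighborhood differs from its intrinsic `ε`-neighborhood lies
within distance `ε` of the set `S_nu ∪ S₀` (non-unique argmax states, or discontinuity
points causing the optimal action to change). -/
theorem stmt1 {E : Type*} [NormedAddCommGroup E] [NormedSpace ℝ E]
    {A : Type*} [Fintype A] [Nonempty A]
    (Q : E → A → ℝ) (ε : ℝ) (hε : 0 < ε)
    (Snu Sd Sn S0 Snin : Set E)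
    (hSnu : Snu = {s | ¬ ∃ a₀, Amax Q s = {a₀}})
    (hSd : Sd = {s | ∃ a, ¬ ContinuousAt (fun x => Q x a) s})
    (hSn : Sn = {s | ∀ ε₁ > (0:ℝ), ∃ s', ‖s' - s‖ ≤ ε₁ ∧ Amax Q s' ≠ Amax Q s})
    (hS0 : S0 = Sn ∩ Sd)
    (hSnin : Snin = {s | {s' | ‖s' - s‖ ≤ ε} ≠ {s' | ‖s' - s‖ ≤ ε ∧ Amax Q s' = Amax Q s}}) :
    ∀ s ∈ Snin, ∃ y ∈ Snu ∪ S0, ‖s - y‖ ≤ ε :=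
  stmt1_general Q ε Snu Sd Sn S0 Snin hSnu hSd hSn hS0 hSnin
end

section
/- Let d ≥ 1, A a nonempty finite set, ε > 0, and Q* : ℝ^d → A → ℝ such that x ↦ Q*(x, a) is continuous for every a ∈ A. With S_nu := {s : Argmax(Q*, s) is not a singleton} and S_nin := {s : B_ε(s) ≠ B*_ε(s)}: (i) S_nin ⊆ S_nu + B_ε, i.e. every s ∈ S_nin lies within distance ε of some point of S_nu; (ii) if moreover S_nu is finite, then the Lebesgue outer measure of S_nin is at most |S_nu| times the Lebesgue measure of a closed ball of radius ε in ℝ^d (i.e. at most C_d · |S_nu| · ε^d for the dimensional constant C_d). -/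
open MeasureTheory
open scoped ENNReal

lemma key {E : Type*} [NormedAddCommGroup E] [NormedSpace ℝ E]
    {A : Type*} [Finite A] [Nonempty A]
    (Q : E → A → ℝ) (hcont : ∀ a, Continuous (fun x => Q x a))
    {ε : ℝ} (hε : 0 ≤ ε) {s s' : E} (hss : ‖s' - s‖ ≤ ε)
    (hne : Amax Q s' ≠ Amax Q s) :
    ∃ y, (¬ ∃ a₀, Amax Q y = {a₀}) ∧ ‖s - y‖ ≤ ε := by
  by_cases hs : ∃ a₀, Amax Q s = {a₀}
  · obtain ⟨a₀, ha₀⟩ := hs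
    by_cases hmem : a₀ ∈ Amax Q s'
    · refine ⟨s', ?_, by rwa [norm_sub_rev]⟩
      rintro ⟨b, hb⟩
      apply hne
      rw [hb, ha₀]
      have : a₀ = b := by rwa [hb] at hmem
      rw [this]
    · -- connectedness along segment
      set γ : ℝ → E := fun t => s + t • (s' - s) with hγ
      have hγc : Continuous γ := by continuity
      have hQc : ∀ a, Continuous (fun t => Q (γ t) a) := fun a => (hcont a).comp hγc
      set T : Set ℝ := {t | a₀ ∈ Amax Q (γ t)} with hT
      set U : Set ℝ := {t | ∃ a, a ≠ a₀ ∧ a ∈ Amax Q (γ t)} with hU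
      have hTc : IsClosed T := by
        have : T = ⋂ a', {t | Q (γ t) a' ≤ Q (γ t) a₀} := by
          ext t; simp [hT, Amax, Set.mem_iInter]
        rw [this]
        exact isClosed_iInter fun a' => isClosed_le (hQc a') (hQc a₀)
      have hUc : IsClosed U := by
        have : U = ⋃ a ∈ {a : A | a ≠ a₀}, ⋂ a', {t | Q (γ t) a' ≤ Q (γ t) a} := by
          ext t; simp [hU, Amax, Set.mem_iUnion, Set.mem_iInter]
        rw [this]
        exact (Set.toFinite _).isClosed_biUnion fun a _ =>
          isClosed_iInter fun a' => isClosed_le (hQc a') (hQc a)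
      have hcover : Set.Icc (0:ℝ) 1 ⊆ T ∪ U := by
        intro t _
        obtain ⟨a, ha⟩ := Finite.exists_max (fun a => Q (γ t) a)
        by_cases h : a = a₀
        · subst h; left; exact ha
        · right; exact ⟨a, h, ha⟩
      have h0 : ((Set.Icc (0:ℝ) 1) ∩ T).Nonempty := by
        refine ⟨0, Set.mem_Icc.2 ⟨le_refl _, zero_le_one⟩, ?_⟩
        have : γ 0 = s := by simp [hγ]
        simp only [hT, Set.mem_setOf_eq, this, ha₀]
        exact rfl
      have h1 : ((Set.Icc (0:ℝ) 1) ∩ U).Nonempty := by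
        refine ⟨1, Set.mem_Icc.2 ⟨zero_le_one, le_refl _⟩, ?_⟩
        have hγ1 : γ 1 = s' := by simp [hγ]
        obtain ⟨a, ha⟩ := Finite.exists_max (fun a => Q s' a)
        have hane : a ≠ a₀ := by
          intro h; apply hmem; rw [← h]; exact ha
        exact ⟨a, hane, by rw [hγ1]; exact ha⟩
      obtain ⟨t, htI, htT, htU⟩ :=
        (isPreconnected_closed_iff.1 isPreconnected_Icc) T U hTc hUc hcover h0 h1
      refine ⟨γ t, ?_, ?_⟩
      · rintro ⟨b, hb⟩
        obtain ⟨a, hane, ha⟩ := htU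
        have hmT : a₀ ∈ Amax Q (γ t) := htT
        have h1 : a₀ = b := by rwa [hb] at hmT
        have h2 : a = b := by rwa [hb] at ha
        exact hane (h2.trans h1.symm)
      · have : s - γ t = -(t • (s' - s)) := by simp [hγ]
        rw [this, norm_neg, norm_smul, Real.norm_eq_abs,
            abs_of_nonneg htI.1]
        calc t * ‖s' - s‖ ≤ 1 * ε := by
              exact mul_le_mul htI.2 hss (norm_nonneg _) zero_le_one
          _ = ε := one_mul ε
  · exact ⟨s, hs, by simp [hε]⟩

/-- For a continuous `Q*` on `ℝ^d`: (i) every state whose `ε`-neighborhood differs from its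
intrinsic `ε`-neighborhood lies within distance `ε` of a state with non-unique argmax; (ii) if
the set of non-unique-argmax states is finite, the outer Lebesgue measure of the difference set
is at most its cardinality times the volume of a closed `ε`-ball. -/
theorem stmt2 {d : ℕ} (hd : 1 ≤ d) {A : Type*} [Fintype A] [Nonempty A]
    (Q : EuclideanSpace ℝ (Fin d) → A → ℝ) (ε : ℝ) (hε : 0 < ε)
    (hcont : ∀ a, Continuous (fun x => Q x a))
    (Snu Snin : Set (EuclideanSpace ℝ (Fin d)))
    (hSnu : Snu = {s | ¬ ∃ a₀, Amax Q s = {a₀}})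
    (hSnin : Snin = {s | {s' | ‖s' - s‖ ≤ ε} ≠ {s' | ‖s' - s‖ ≤ ε ∧ Amax Q s' = Amax Q s}}) :
    (∀ s ∈ Snin, ∃ y ∈ Snu, ‖s - y‖ ≤ ε) ∧
    (∀ hf : Snu.Finite,
      volume Snin ≤ (hf.toFinset.card : ℝ≥0∞) *
        volume (Metric.closedBall (0 : EuclideanSpace ℝ (Fin d)) ε)) := by
  have part1 : ∀ s ∈ Snin, ∃ y ∈ Snu, ‖s - y‖ ≤ ε := by
    intro s hs
    rw [hSnin, Set.mem_setOf_eq] at hs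
    have : ∃ s', ‖s' - s‖ ≤ ε ∧ Amax Q s' ≠ Amax Q s := by
      by_contra h
      push_neg at h
      apply hs
      ext s'
      simp only [Set.mem_setOf_eq]
      exact ⟨fun hn => ⟨hn, h s' hn⟩, fun hn => hn.1⟩
    obtain ⟨s', hss, hne⟩ := this
    obtain ⟨y, hy, hny⟩ := key Q hcont hε.le hss hne
    exact ⟨y, by rw [hSnu]; exact hy, hny⟩
  refine ⟨part1, fun hf => ?_⟩
  have hsub : Snin ⊆ ⋃ y ∈ hf.toFinset, Metric.closedBall y ε := by
    intro s hs
    obtain ⟨y, hy, hny⟩ := part1 s hs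
    exact Set.mem_biUnion (hf.mem_toFinset.2 hy) (by rwa [Metric.mem_closedBall, dist_eq_norm])
  calc volume Snin ≤ volume (⋃ y ∈ hf.toFinset, Metric.closedBall y ε) :=
        measure_mono hsub
    _ ≤ ∑ y ∈ hf.toFinset, volume (Metric.closedBall y ε) := measure_biUnion_finset_le _ _
    _ = ∑ y ∈ hf.toFinset, volume (Metric.closedBall (0 : EuclideanSpace ℝ (Fin d)) ε) := by
        refine Finset.sum_congr rfl fun y _ => ?_
        exact Measure.addHaar_closedBall_center volume y ε
    _ = (hf.toFinset.card : ℝ≥0∞) * volume (Metric.closedBall (0 : EuclideanSpace ℝ (Fin d)) ε) := by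
        rw [Finset.sum_const, nsmul_eq_mul]
end

section
/- Density-MDP setup. Let B : S → Set S be a perturbation map with s' ∈ B(s') for every s' ∈ S, and let Q* : S × A → ℝ be a bounded measurable function with T_B Q* = Q* pointwise. Assume the intrinsic-adversary property: for every s' ∈ S and every s_ν ∈ B(s'), Argmax(Q*, s_ν) = Argmax(Q*, s'). Define the consistent adversarial robust (CAR) operator by (T_car Q*)(s, a) = r(s, a) + γ ∫_S ( inf_{s_ν ∈ B(s')} sup_{a' ∈ Argmax(Q*, s_ν)} Q*(s', a') ) P(s, a, s') dμ(s'). Then T_car Q* = Q* pointwise: the Bellman optimal Q-function is a fixed point of the CAR operator within the intrinsic state-adversarial MDP. -/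
open MeasureTheory
open scoped ENNReal

/-- Within the intrinsic state-adversarial MDP (adversaries cannot change the argmax set of
`Q*`), the Bellman optimal `Q`-function is a fixed point of the consistent adversarial robust
(CAR) operator. -/
theorem stmt3 {S : Type*} [MeasurableSpace S] (μ : Measure S)
    {A : Type*} [Fintype A] [Nonempty A]
    (r : S → A → ℝ) (hr : ∀ a, Measurable (fun s => r s a))
    (γ : ℝ) (hγ0 : 0 < γ) (hγ1 : γ < 1)
    (P : S → A → S → ℝ)
    (hPmeas : ∀ a, Measurable (fun x : S × S => P x.1 a x.2))
    (hPnonneg : ∀ s a s', 0 ≤ P s a s')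
    (hPint : ∀ s a, ∫ s', P s a s' ∂μ = 1)
    (B : S → Set S) (hB : ∀ s', s' ∈ B s')
    (Qstar : S → A → ℝ)
    (hQm : ∀ a, Measurable (fun s => Qstar s a))
    (hQb : ∃ M, ∀ s a, |Qstar s a| ≤ M)
    (hfix : ∀ s a, r s a + γ * ∫ s', (⨆ a', Qstar s' a') * P s a s' ∂μ = Qstar s a)
    (hintr : ∀ s', ∀ sν ∈ B s', Amax Qstar sν = Amax Qstar s') :
    ∀ s a, r s a + γ * ∫ s',
        (⨅ sν : B s', ⨆ a' : Amax Qstar (sν : S), Qstar s' (a' : A)) * P s a s' ∂μ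
      = Qstar s a := by
  have h : ∀ s' : S, (⨅ sν : B s', ⨆ a' : Amax Qstar (sν : S), Qstar s' (a' : A))
      = ⨆ a', Qstar s' a' := by
    intro s'
    have hne : (Amax Qstar s').Nonempty := by
      obtain ⟨a0, ha0⟩ := Finite.exists_max (Qstar s')
      exact ⟨a0, ha0⟩
    haveI : Nonempty (Amax Qstar s') := hne.to_subtype
    have hsup : (⨆ a' : Amax Qstar s', Qstar s' (a' : A)) = ⨆ a', Qstar s' a' := by
      have hM : ∀ a' : Amax Qstar s', Qstar s' (a' : A) = ⨆ b, Qstar s' b := by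
        rintro ⟨a', ha'⟩
        exact le_antisymm (le_ciSup (Finite.bddAbove_range _) a') (ciSup_le ha')
      calc (⨆ a' : Amax Qstar s', Qstar s' (a' : A))
          = ⨆ _ : Amax Qstar s', ⨆ b, Qstar s' b := iSup_congr hM
        _ = ⨆ b, Qstar s' b := ciSup_const
    have hinner : ∀ sν : B s',
        (⨆ a' : Amax Qstar (sν : S), Qstar s' (a' : A)) = ⨆ a', Qstar s' a' := by
      rintro ⟨sν, hsν⟩
      rw [show Amax Qstar sν = Amax Qstar s' from hintr s' sν hsν]
      exact hsup
    haveI : Nonempty (B s') := ⟨⟨s', hB s'⟩⟩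
    calc (⨅ sν : B s', ⨆ a' : Amax Qstar (sν : S), Qstar s' (a' : A))
        = ⨅ _ : B s', ⨆ a', Qstar s' a' := iInf_congr hinner
      _ = ⨆ a', Qstar s' a' := ciInf_const
  intro s a
  simp only [h]
  exact hfix s a
end

section
/- Let k > 0 and let Q* : [−1,1] → {a₁, a₂} → ℝ satisfy Q*(s, a₂) − Q*(s, a₁) > 2ks for all s ∈ (0,1] and Q*(s, a₁) − Q*(s, a₂) > −2ks for all s ∈ [−1, 0). Then for every δ ∈ (0, k], every ε > 0, and every Q : [−1,1] → {a₁, a₂} → ℝ with |Q(s,a) − Q*(s,a)| ≤ δ for all s and a: (i) {s ∈ [−1,1] : some maximizer a of Q(s,·) satisfies Q*(s,a) < max_{a'} Q*(s,a')} ⊆ [−δ/k, δ/k], so its Lebesgue measure is at most 2δ/k; (ii) {s ∈ [−1,1] : ∃ s_ν ∈ [−1,1] with |s_ν − s| ≤ ε and some maximizer a of Q(s_ν,·) with Q*(s,a) < max_{a'} Q*(s,a')} ⊆ [−δ/k − ε, δ/k + ε], so its Lebesgue measure is at most 2ε + 2δ/k. -/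
open MeasureTheory
open scoped ENNReal

lemma bool_sup_eq {f : Bool → ℝ} {b : Bool} (h : ∀ b', f b' ≤ f b) :
    (⨆ b', f b') = f b :=
  le_antisymm (ciSup_le h) (le_ciSup (Set.Finite.bddAbove (Set.finite_range f)) b)

/-- Necessity of the `L^∞` space, part (2): `L^∞`-closeness `δ ≤ k` to a `Q*` with a linear
optimality gap controls both the naturally suboptimal state set (within `[−δ/k, δ/k]`, measure
`≤ 2δ/k`) and the `ε`-adversarial state set (within `[−δ/k−ε, δ/k+ε]`, measure `≤ 2ε + 2δ/k`).
Actions: `a₁ = false`, `a₂ = true`. -/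
theorem stmt5 (k : ℝ) (hk : 0 < k) (Qstar : ℝ → Bool → ℝ)
    (hgap1 : ∀ s ∈ Set.Ioc (0:ℝ) 1, 2*k*s < Qstar s true - Qstar s false)
    (hgap2 : ∀ s ∈ Set.Ico (-1:ℝ) 0, -(2*k*s) < Qstar s false - Qstar s true)
    (δ : ℝ) (hδ0 : 0 < δ) (hδk : δ ≤ k) (ε : ℝ) (hε : 0 < ε)
    (Q : ℝ → Bool → ℝ)
    (hQ : ∀ s ∈ Set.Icc (-1:ℝ) 1, ∀ a, |Q s a - Qstar s a| ≤ δ) :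
    ({s ∈ Set.Icc (-1:ℝ) 1 | ∃ a, (∀ a', Q s a' ≤ Q s a) ∧ Qstar s a < ⨆ a', Qstar s a'}
        ⊆ Set.Icc (-(δ/k)) (δ/k) ∧
      volume {s ∈ Set.Icc (-1:ℝ) 1 |
          ∃ a, (∀ a', Q s a' ≤ Q s a) ∧ Qstar s a < ⨆ a', Qstar s a'}
        ≤ ENNReal.ofReal (2*δ/k)) ∧
    ({s ∈ Set.Icc (-1:ℝ) 1 | ∃ sν ∈ Set.Icc (-1:ℝ) 1, |sν - s| ≤ ε ∧
          ∃ a, (∀ a', Q sν a' ≤ Q sν a) ∧ Qstar s a < ⨆ a', Qstar s a'}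
        ⊆ Set.Icc (-(δ/k) - ε) (δ/k + ε) ∧
      volume {s ∈ Set.Icc (-1:ℝ) 1 | ∃ sν ∈ Set.Icc (-1:ℝ) 1, |sν - s| ≤ ε ∧
          ∃ a, (∀ a', Q sν a' ≤ Q sν a) ∧ Qstar s a < ⨆ a', Qstar s a'}
        ≤ ENNReal.ofReal (2*ε + 2*δ/k)) := by
  have hδk' : 0 < δ / k := div_pos hδ0 hk
  -- On states s with δ/k < s ≤ 1, Q strictly prefers true
  have keyP : ∀ s ∈ Set.Icc (-1:ℝ) 1, δ/k < s → Q s false < Q s true := by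
    intro s hs hlt
    have hs0 : 0 < s := lt_trans hδk' hlt
    have hgap := hgap1 s ⟨hs0, hs.2⟩
    have hks : δ < k * s := by
      have := (div_lt_iff₀ hk).mp hlt
      linarith [this]
    have h1 := abs_le.mp (hQ s hs true)
    have h2 := abs_le.mp (hQ s hs false)
    linarith [h1.1, h2.2]
  have keyN : ∀ s ∈ Set.Icc (-1:ℝ) 1, s < -(δ/k) → Q s true < Q s false := by
    intro s hs hlt
    have hs0 : s < 0 := lt_trans hlt (by linarith)
    have hgap := hgap2 s ⟨hs.1, hs0⟩
    have hks : δ < -(k * s) := by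
      have : δ / k < -s := by linarith
      have := (div_lt_iff₀ hk).mp this
      linarith
    have h1 := abs_le.mp (hQ s hs true)
    have h2 := abs_le.mp (hQ s hs false)
    linarith [h1.2, h2.1]
  -- supremum identities on the strict-gap regions
  have supP : ∀ s, 0 < s → s ≤ 1 → (⨆ a', Qstar s a') = Qstar s true ∧
      Qstar s false < Qstar s true := by
    intro s h0 h1
    have hgap := hgap1 s ⟨h0, h1⟩
    have hlt : Qstar s false < Qstar s true := by nlinarith
    refine ⟨bool_sup_eq ?_, hlt⟩
    intro b; cases b <;> simp [le_of_lt hlt]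
  have supN : ∀ s, -1 ≤ s → s < 0 → (⨆ a', Qstar s a') = Qstar s false ∧
      Qstar s true < Qstar s false := by
    intro s h1 h0
    have hgap := hgap2 s ⟨h1, h0⟩
    have hlt : Qstar s true < Qstar s false := by nlinarith
    refine ⟨bool_sup_eq ?_, hlt⟩
    intro b; cases b <;> simp [le_of_lt hlt]
  -- If s and the perturbed state are both above δ/k, no suboptimal maximizer exists
  have coreP : ∀ s ∈ Set.Icc (-1:ℝ) 1, δ/k < s → ∀ sν ∈ Set.Icc (-1:ℝ) 1, δ/k < sν →
      ¬ ∃ a, (∀ a', Q sν a' ≤ Q sν a) ∧ Qstar s a < ⨆ a', Qstar s a' := by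
    rintro s hs shi sν hsν hνhi ⟨a, hmax, hsub⟩
    have hqs := supP s (lt_trans hδk' shi) hs.2
    rw [hqs.1] at hsub
    cases a with
    | true => exact lt_irrefl _ hsub
    | false => exact absurd (hmax true) (not_le.mpr (keyP sν hsν hνhi))
  have coreN : ∀ s ∈ Set.Icc (-1:ℝ) 1, s < -(δ/k) → ∀ sν ∈ Set.Icc (-1:ℝ) 1, sν < -(δ/k) →
      ¬ ∃ a, (∀ a', Q sν a' ≤ Q sν a) ∧ Qstar s a < ⨆ a', Qstar s a' := by
    rintro s hs slo sν hsν hνlo ⟨a, hmax, hsub⟩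
    have hqs := supN s hs.1 (lt_trans slo (by linarith))
    rw [hqs.1] at hsub
    cases a with
    | false => exact lt_irrefl _ hsub
    | true => exact absurd (hmax false) (not_le.mpr (keyN sν hsν hνlo))
  have sub1 : {s ∈ Set.Icc (-1:ℝ) 1 | ∃ a, (∀ a', Q s a' ≤ Q s a) ∧
      Qstar s a < ⨆ a', Qstar s a'} ⊆ Set.Icc (-(δ/k)) (δ/k) := by
    rintro s ⟨hs, ha⟩
    constructor
    · by_contra h
      exact coreN s hs (not_le.mp h) s hs (not_le.mp h) ha
    · by_contra h
      exact coreP s hs (not_le.mp h) s hs (not_le.mp h) ha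
  have sub2 : {s ∈ Set.Icc (-1:ℝ) 1 | ∃ sν ∈ Set.Icc (-1:ℝ) 1, |sν - s| ≤ ε ∧
      ∃ a, (∀ a', Q sν a' ≤ Q sν a) ∧ Qstar s a < ⨆ a', Qstar s a'}
      ⊆ Set.Icc (-(δ/k) - ε) (δ/k + ε) := by
    rintro s ⟨hs, sν, hsν, hdist, ha⟩
    have habs := abs_le.mp hdist
    constructor
    · by_contra h
      push_neg at h
      have hslo : s < -(δ/k) := by linarith
      have hνlo : sν < -(δ/k) := by linarith [habs.2]
      exact coreN s hs hslo sν hsν hνlo ha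
    · by_contra h
      push_neg at h
      have hshi : δ/k < s := by linarith
      have hνhi : δ/k < sν := by linarith [habs.1]
      exact coreP s hs hshi sν hsν hνhi ha
  refine ⟨⟨sub1, ?_⟩, ⟨sub2, ?_⟩⟩
  · calc volume _ ≤ volume (Set.Icc (-(δ/k)) (δ/k)) := measure_mono sub1
    _ = ENNReal.ofReal (δ/k - (-(δ/k))) := Real.volume_Icc
    _ = ENNReal.ofReal (2*δ/k) := by ring_nf
  · calc volume _ ≤ volume (Set.Icc (-(δ/k) - ε) (δ/k + ε)) := measure_mono sub2
    _ = ENNReal.ofReal ((δ/k + ε) - (-(δ/k) - ε)) := Real.volume_Icc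
    _ = ENNReal.ofReal (2*ε + 2*δ/k) := by ring_nf
end

section
/- Stability of the Bellman optimality equation. Density-MDP setup with μ(S) < ∞. Let 1 ≤ p ≤ q ≤ ∞ and set C_{P,p} := sup_{(s,a)} ‖P(s,a,·)‖_{L^{p/(p−1)}(μ)} (L^∞ norm for p = 1, L^1 norm for p = ∞). Assume γ·C_{P,p} < 1 and γ·C_{P,p}·(|A|·μ(S))^{1/p} < 1 (the latter is the paper's condition p ≥ log(|A|·μ(S)) / log(1/(γ C_{P,p})) made strict). Let Q* : S × A → ℝ be measurable with T_B Q* = Q* pointwise, and let Q : S × A → ℝ be measurable with Q − Q* ∈ L^p(S × A) and T_B Q − Q ∈ L^q(S × A). Then ‖Q − Q*‖_p ≤ (|A|·μ(S))^{1/p − 1/q} / (1 − γ·C_{P,p}·(|A|·μ(S))^{1/p}) · ‖T_B Q − Q‖_q. In particular the equation T_B Q = Q is (L^q, L^p)-stable. -/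
/-!
Since `T Q* = Q*`, the error splits as `Q - Q* = (T Q - T Q*) - (T Q - Q)`. At each `(s, a)`,
`T Q - T Q* = γ ∫ (max Q - max Q*) P(s, a, ·)`, and over a finite action set the gap of the maxima
is dominated by `|Q - Q*|` at a single action, so Hölder bounds `|T Q - T Q*|` uniformly by
`γ C ‖Q - Q*‖_p`. A uniform bound costs a factor `(|A| μ(S))^{1/p}` in `L^p(μ ⊗ count)`, and
`L^q ⊆ L^p` costs `(|A| μ(S))^{1/p - 1/q}`. Hence
`‖Q - Q*‖_p ≤ c ‖Q - Q*‖_p + (|A| μ(S))^{1/p - 1/q} ‖T Q - Q‖_q` with `c < 1`, and the finite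
quantity `‖Q - Q*‖_p` can be absorbed into the left-hand side.
-/

open MeasureTheory
open scoped ENNReal

theorem exists_abs_ciSup_sub_ciSup_le {ι : Type*} [Finite ι] [Nonempty ι] (f g : ι → ℝ) :
    ∃ i, |(⨆ i, f i) - ⨆ i, g i| ≤ |f i - g i| := by
  obtain ⟨i, hi⟩ := exists_eq_ciSup_of_finite (f := f)
  obtain ⟨j, hj⟩ := exists_eq_ciSup_of_finite (f := g)
  have hgi : g i ≤ ⨆ i, g i := le_ciSup (Set.finite_range g).bddAbove i
  have hfj : f j ≤ ⨆ i, f i := le_ciSup (Set.finite_range f).bddAbove j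
  rcases le_total (⨆ i, g i) (⨆ i, f i) with h | h
  · exact ⟨i, abs_le_abs_of_nonneg (by linarith) (by linarith)⟩
  · exact ⟨j, abs_le_abs_of_nonpos (by linarith) (by linarith)⟩

section ProdCount

variable {S A : Type*} [MeasurableSpace S] [MeasurableSpace A] [MeasurableSingletonClass A]
  [Fintype A] {μ : Measure S}

theorem eLpNorm_le_eLpNorm_prod_count {E F : Type*} [NormedAddCommGroup E] [NormedAddCommGroup F]
    {g : S → E} {f : S × A → F} (hf : AEStronglyMeasurable f (μ.prod Measure.count))
    (hgf : ∀ s, ∃ a, ‖g s‖ₑ ≤ ‖f (s, a)‖ₑ) (p : ℝ≥0∞) :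
    eLpNorm g p μ ≤ eLpNorm f p (μ.prod Measure.count) := by
  rcases eq_or_ne p 0 with rfl | hp0
  · simp
  rcases eq_or_ne p ∞ with rfl | hptop
  · rw [eLpNorm_exponent_top, eLpNorm_exponent_top]
    refine essSup_le_of_ae_le _ ?_
    filter_upwards [Measure.ae_ae_of_ae_prod
      (enorm_ae_le_eLpNormEssSup f (μ.prod Measure.count))] with s hs
    obtain ⟨a, ha⟩ := hgf s
    exact ha.trans (Measure.ae_count_iff.1 hs a)
  rw [eLpNorm_eq_lintegral_rpow_enorm_toReal hp0 hptop,
    eLpNorm_eq_lintegral_rpow_enorm_toReal hp0 hptop,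
    lintegral_prod _ (hf.enorm.pow_const _)]
  gcongr with s
  obtain ⟨a, ha⟩ := hgf s
  rw [lintegral_count, tsum_fintype]
  calc ‖g s‖ₑ ^ p.toReal ≤ ‖f (s, a)‖ₑ ^ p.toReal := by gcongr
    _ ≤ ∑ a, ‖f (s, a)‖ₑ ^ p.toReal :=
      Finset.single_le_sum (f := fun a => ‖f (s, a)‖ₑ ^ p.toReal) (by simp) (Finset.mem_univ a)

theorem eLpNorm_ciSup_sub_ciSup_le [Nonempty A] {Q Q' : S → A → ℝ}
    (hQ : AEStronglyMeasurable (fun x : S × A => Q x.1 x.2 - Q' x.1 x.2) (μ.prod Measure.count))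
    (p : ℝ≥0∞) :
    eLpNorm (fun s => (⨆ a, Q s a) - ⨆ a, Q' s a) p μ ≤
      eLpNorm (fun x : S × A => Q x.1 x.2 - Q' x.1 x.2) p (μ.prod Measure.count) := by
  refine eLpNorm_le_eLpNorm_prod_count hQ (fun s => ?_) p
  obtain ⟨a, ha⟩ := exists_abs_ciSup_sub_ciSup_le (Q s) (Q' s)
  exact ⟨a, by simpa only [← ofReal_norm, Real.norm_eq_abs] using ENNReal.ofReal_le_ofReal ha⟩

end ProdCount

section Integral

variable {α : Type*} [MeasurableSpace α] {μ : Measure α}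

-- `f` and `g` need not be integrable: otherwise both Bochner integrals are the junk value `0`.
theorem enorm_integral_sub_integral_le {E : Type*} [NormedAddCommGroup E] [NormedSpace ℝ E]
    {f g : α → E} (hfg : Integrable (fun x => f x - g x) μ) :
    ‖(∫ x, f x ∂μ) - ∫ x, g x ∂μ‖ₑ ≤ ‖∫ x, f x - g x ∂μ‖ₑ := by
  by_cases hg : Integrable g μ
  · rw [integral_sub ((hfg.add hg).congr (.of_forall fun x => sub_add_cancel (f x) (g x))) hg]
  · have hf : ¬ Integrable f μ := fun hf =>
      hg ((hf.sub hfg).congr (.of_forall fun x => sub_sub_cancel (f x) (g x)))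
    simp [integral_undef hf, integral_undef hg]

theorem enorm_integral_mul_le_eLpNorm_mul_eLpNorm {p q : ℝ≥0∞} [ENNReal.HolderConjugate p q]
    {f g : α → ℝ} (hf : AEStronglyMeasurable f μ) (hg : AEStronglyMeasurable g μ) :
    ‖∫ x, f x * g x ∂μ‖ₑ ≤ eLpNorm f p μ * eLpNorm g q μ :=
  calc ‖∫ x, f x * g x ∂μ‖ₑ ≤ ∫⁻ x, ‖f x * g x‖ₑ ∂μ := enorm_integral_le_lintegral_enorm _
    _ = eLpNorm (f • g) 1 μ := eLpNorm_one_eq_lintegral_enorm.symm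
    _ ≤ eLpNorm f p μ * eLpNorm g q μ := eLpNorm_smul_le_mul_eLpNorm hg hf

end Integral

theorem ENNReal.le_div_of_le_mul_add {x y c : ℝ≥0∞} (hx : x ≠ ∞) (hc : c < 1)
    (h : x ≤ c * x + y) : x ≤ y / (1 - c) := by
  rw [ENNReal.le_div_iff_mul_le (.inl (tsub_pos_of_lt hc).ne') (.inl (by simp)),
    ENNReal.mul_sub fun _ _ => hx, mul_one, tsub_le_iff_right, mul_comm, add_comm]
  exact h

theorem eLpNorm_le_of_forall_enorm_add_le {X : Type*} [MeasurableSpace X] {ν : Measure X}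
    [IsFiniteMeasure ν] {p q : ℝ≥0∞} (hp : 1 ≤ p) (hpq : p ≤ q) {E B : X → ℝ} (hE : MemLp E p ν)
    (hB : AEStronglyMeasurable B ν) {c : ℝ≥0∞} (hc : c * ν Set.univ ^ (1 / p).toReal < 1)
    (h : ∀ x, ‖E x + B x‖ₑ ≤ c * eLpNorm E p ν) :
    eLpNorm E p ν ≤
      ν Set.univ ^ (1 / p - 1 / q).toReal / (1 - c * ν Set.univ ^ (1 / p).toReal) *
        eLpNorm B q ν := by
  have hp0 : p ≠ 0 := (zero_lt_one.trans_le hp).ne'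
  have hEB : eLpNorm (E + B) p ν ≤ c * ν Set.univ ^ (1 / p).toReal * eLpNorm E p ν := by
    rw [mul_right_comm, one_div, ENNReal.toReal_inv]
    exact eLpNorm_le_of_ae_enorm_bound (.of_forall h)
  have hBpq : eLpNorm B p ν ≤ ν Set.univ ^ (1 / p - 1 / q).toReal * eLpNorm B q ν := by
    have hexp : (1 / p - 1 / q).toReal = 1 / p.toReal - 1 / q.toReal := by
      rw [ENNReal.toReal_sub_of_le (by gcongr) (by simpa using hp0)]
      simp
    rw [hexp, mul_comm]
    exact eLpNorm_le_eLpNorm_mul_rpow_measure_univ hpq hB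
  have htri : eLpNorm E p ν ≤ eLpNorm (E + B) p ν + eLpNorm B p ν := by
    simpa using eLpNorm_sub_le (hE.1.add hB) hB hp
  rw [div_eq_mul_inv, mul_right_comm, ← div_eq_mul_inv]
  exact ENNReal.le_div_of_le_mul_add hE.eLpNorm_ne_top hc (htri.trans (add_le_add hEB hBpq))

section Bellman

variable {S A : Type*} [MeasurableSpace S] [MeasurableSpace A] [MeasurableSingletonClass A]
  [Fintype A] [Nonempty A] (μ : Measure S)

noncomputable def bellmanOptimalityOp (r : S → A → ℝ) (γ : ℝ) (P : S → A → S → ℝ)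
    (Q : S → A → ℝ) (s : S) (a : A) : ℝ :=
  r s a + γ * ∫ s', (⨆ a', Q s' a') * P s a s' ∂μ

theorem enorm_bellmanOptimalityOp_sub_le (r : S → A → ℝ) {γ : ℝ} (hγ : 0 ≤ γ)
    {P : S → A → S → ℝ} {p p' : ℝ≥0∞} [ENNReal.HolderConjugate p p'] {Q Q' : S → A → ℝ}
    (hQ : ∀ a, Measurable (fun s => Q s a)) (hQ' : ∀ a, Measurable (fun s => Q' s a))
    (hQQ' : MemLp (fun x : S × A => Q x.1 x.2 - Q' x.1 x.2) p (μ.prod Measure.count))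
    {s : S} {a : A} (hP : MemLp (fun s' => P s a s') p' μ) :
    ‖bellmanOptimalityOp μ r γ P Q s a - bellmanOptimalityOp μ r γ P Q' s a‖ₑ ≤
      ENNReal.ofReal γ *
        eLpNorm (fun x : S × A => Q x.1 x.2 - Q' x.1 x.2) p (μ.prod Measure.count) *
        eLpNorm (fun s' => P s a s') p' μ := by
  set v : S → ℝ := fun s => (⨆ a, Q s a) - ⨆ a, Q' s a
  have hvp : eLpNorm v p μ ≤ eLpNorm (fun x : S × A => Q x.1 x.2 - Q' x.1 x.2) p
      (μ.prod Measure.count) := eLpNorm_ciSup_sub_ciSup_le hQQ'.1 p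
  have hv : MemLp v p μ :=
    ⟨((Measurable.iSup hQ).sub (Measurable.iSup hQ')).aestronglyMeasurable,
      hvp.trans_lt hQQ'.eLpNorm_lt_top⟩
  have hsub : ∀ s', (⨆ a, Q s' a) * P s a s' - (⨆ a, Q' s' a) * P s a s' = v s' * P s a s' :=
    fun s' => (sub_mul _ _ _).symm
  have hint : Integrable (fun s' => (⨆ a, Q s' a) * P s a s' - (⨆ a, Q' s' a) * P s a s') μ := by
    simpa only [hsub] using memLp_one_iff_integrable.1 (hP.mul' hv)
  calc ‖bellmanOptimalityOp μ r γ P Q s a - bellmanOptimalityOp μ r γ P Q' s a‖ₑ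
      = ENNReal.ofReal γ * ‖(∫ s', (⨆ a, Q s' a) * P s a s' ∂μ) -
          ∫ s', (⨆ a, Q' s' a) * P s a s' ∂μ‖ₑ := by
        rw [bellmanOptimalityOp, bellmanOptimalityOp, add_sub_add_left_eq_sub, ← mul_sub,
          enorm_mul, Real.enorm_of_nonneg hγ]
    _ ≤ ENNReal.ofReal γ * ‖∫ s', v s' * P s a s' ∂μ‖ₑ := by
        gcongr
        simpa only [hsub] using enorm_integral_sub_integral_le hint
    _ ≤ ENNReal.ofReal γ * (eLpNorm v p μ * eLpNorm (fun s' => P s a s') p' μ) := by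
        gcongr
        exact enorm_integral_mul_le_eLpNorm_mul_eLpNorm hv.1 hP.1
    _ ≤ _ := by
        rw [mul_assoc]
        gcongr

end Bellman

theorem stmt6_general {S : Type*} [MeasurableSpace S] (μ : Measure S) [IsFiniteMeasure μ]
    {A : Type*} [Fintype A] [Nonempty A] [MeasurableSpace A] [MeasurableSingletonClass A]
    (r : S → A → ℝ)
    (γ : ℝ) (hγ0 : 0 < γ)
    (P : S → A → S → ℝ)
    (hPmeas : ∀ a, Measurable (fun x : S × S => P x.1 a x.2))
    (p q p' : ℝ≥0∞) (hp : 1 ≤ p) (hpq : p ≤ q) (hp' : 1/p + 1/p' = 1)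
    (C : ℝ≥0∞) (hC : C = ⨆ s, ⨆ a, eLpNorm (fun s' => P s a s') p' μ)
    (h1 : ENNReal.ofReal γ * C < 1)
    (h2 : ENNReal.ofReal γ * C * ((Fintype.card A : ℝ≥0∞) * μ Set.univ) ^ (1/p).toReal < 1)
    (Qstar Q : S → A → ℝ)
    (hQstarMeas : ∀ a, Measurable (fun s => Qstar s a))
    (hQMeas : ∀ a, Measurable (fun s => Q s a))
    (hfix : ∀ s a, r s a + γ * ∫ s', (⨆ a', Qstar s' a') * P s a s' ∂μ = Qstar s a)
    (hmemp : MemLp (fun x : S × A => Q x.1 x.2 - Qstar x.1 x.2) p (μ.prod Measure.count))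
    (hmemq : MemLp
      (fun x : S × A =>
        (r x.1 x.2 + γ * ∫ s', (⨆ a', Q s' a') * P x.1 x.2 s' ∂μ) - Q x.1 x.2)
      q (μ.prod Measure.count)) :
    eLpNorm (fun x : S × A => Q x.1 x.2 - Qstar x.1 x.2) p (μ.prod Measure.count) ≤
      ((Fintype.card A : ℝ≥0∞) * μ Set.univ) ^ (1/p - 1/q).toReal /
        (1 - ENNReal.ofReal γ * C * ((Fintype.card A : ℝ≥0∞) * μ Set.univ) ^ (1/p).toReal) *
      eLpNorm
        (fun x : S × A =>
          (r x.1 x.2 + γ * ∫ s', (⨆ a', Q s' a') * P x.1 x.2 s' ∂μ) - Q x.1 x.2)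
        q (μ.prod Measure.count) := by
  have hconj : ENNReal.HolderConjugate p p' :=
    ENNReal.holderConjugate_iff.2 (by simpa only [one_div] using hp')
  have hC_ne_top : C ≠ ∞ := by
    rintro rfl
    simp [ENNReal.mul_top, hγ0] at h1
  have hPC : ∀ s a, eLpNorm (fun s' => P s a s') p' μ ≤ C := fun s a =>
    hC ▸ le_iSup₂ (f := fun s a => eLpNorm (fun s' => P s a s') p' μ) s a
  have hP : ∀ s a, MemLp (fun s' => P s a s') p' μ := fun s a =>
    ⟨((hPmeas a).comp measurable_prodMk_left).aestronglyMeasurable,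
      (hPC s a).trans_lt hC_ne_top.lt_top⟩
  have hν : (μ.prod (Measure.count : Measure A)) Set.univ = Fintype.card A * μ Set.univ := by
    rw [← Set.univ_prod_univ, Measure.prod_prod, Measure.count_univ, mul_comm]
    simp
  rw [← hν] at h2 ⊢
  refine eLpNorm_le_of_forall_enorm_add_le hp hpq hmemp hmemq.1 h2 fun ⟨s, a⟩ => ?_
  calc ‖Q s a - Qstar s a + (bellmanOptimalityOp μ r γ P Q s a - Q s a)‖ₑ
      = ‖bellmanOptimalityOp μ r γ P Q s a - bellmanOptimalityOp μ r γ P Qstar s a‖ₑ := by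
        rw [show bellmanOptimalityOp μ r γ P Qstar s a = Qstar s a from hfix s a]
        congr 1
        ring
    _ ≤ _ := enorm_bellmanOptimalityOp_sub_le μ r hγ0.le hQMeas hQstarMeas hmemp (hP s a)
    _ ≤ _ := by
        rw [mul_right_comm]
        gcongr
        exact hPC s a

/-- Stability of the Bellman optimality equation: under `γ C_{P,p} < 1` and
`γ C_{P,p} (|A| μ(S))^{1/p} < 1`, with `1 ≤ p ≤ q ≤ ∞` and `p'` the conjugate exponent of `p`,
the `L^p` distance of `Q` to the Bellman fixed point `Q*` is controlled by the `L^q` Bellman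
error of `Q`.  Norms are on `S × A` with `μ ⊗ counting`. -/
theorem stmt6 {S : Type*} [MeasurableSpace S] (μ : Measure S) [IsFiniteMeasure μ]
    {A : Type*} [Fintype A] [Nonempty A] [MeasurableSpace A] [MeasurableSingletonClass A]
    (r : S → A → ℝ) (hr : ∀ a, Measurable (fun s => r s a))
    (γ : ℝ) (hγ0 : 0 < γ) (hγ1 : γ < 1)
    (P : S → A → S → ℝ)
    (hPmeas : ∀ a, Measurable (fun x : S × S => P x.1 a x.2))
    (hPnonneg : ∀ s a s', 0 ≤ P s a s')
    (hPint : ∀ s a, ∫ s', P s a s' ∂μ = 1)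
    (p q p' : ℝ≥0∞) (hp : 1 ≤ p) (hpq : p ≤ q) (hp' : 1/p + 1/p' = 1)
    (C : ℝ≥0∞) (hC : C = ⨆ s, ⨆ a, eLpNorm (fun s' => P s a s') p' μ)
    (h1 : ENNReal.ofReal γ * C < 1)
    (h2 : ENNReal.ofReal γ * C * ((Fintype.card A : ℝ≥0∞) * μ Set.univ) ^ (1/p).toReal < 1)
    (Qstar Q : S → A → ℝ)
    (hQstarMeas : ∀ a, Measurable (fun s => Qstar s a))
    (hQMeas : ∀ a, Measurable (fun s => Q s a))
    (hfix : ∀ s a, r s a + γ * ∫ s', (⨆ a', Qstar s' a') * P s a s' ∂μ = Qstar s a)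
    (hmemp : MemLp (fun x : S × A => Q x.1 x.2 - Qstar x.1 x.2) p (μ.prod Measure.count))
    (hmemq : MemLp
      (fun x : S × A =>
        (r x.1 x.2 + γ * ∫ s', (⨆ a', Q s' a') * P x.1 x.2 s' ∂μ) - Q x.1 x.2)
      q (μ.prod Measure.count)) :
    eLpNorm (fun x : S × A => Q x.1 x.2 - Qstar x.1 x.2) p (μ.prod Measure.count) ≤
      ((Fintype.card A : ℝ≥0∞) * μ Set.univ) ^ (1/p - 1/q).toReal /
        (1 - ENNReal.ofReal γ * C * ((Fintype.card A : ℝ≥0∞) * μ Set.univ) ^ (1/p).toReal) *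
      eLpNorm
        (fun x : S × A =>
          (r x.1 x.2 + γ * ∫ s', (⨆ a', Q s' a') * P x.1 x.2 s' ∂μ) - Q x.1 x.2)
        q (μ.prod Measure.count) :=
  stmt6_general μ r γ hγ0 P hPmeas p q p' hp hpq hp' C hC h1 h2 Qstar Q hQstarMeas hQMeas hfix hmemp
    hmemq
end

section
/- Zero sampled Bellman error does not control the L^p distance to Q*. Consider the explicit deterministic MDP on [−1,1] (with any k₂ ≥ k₁ > 0 and γ ∈ (0,1)), and let Q* be its unique bounded measurable fixed point of T_B. Then for every countable set B₀ ⊆ [−1,1] and every n ∈ ℕ there exists a bounded measurable Q : [−1,1] × A → ℝ such that (T_B Q)(s, a) = Q(s, a) for every s ∈ B₀ and every a ∈ A, and yet ‖Q − Q*‖_{L^p} ≥ n for every p ∈ [1, ∞]. Consequently, for any state-action weighting supported on a countable set of states, the weighted Bellman error of Q vanishes while Q is arbitrarily far from Q* in every L^p norm. -/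
open MeasureTheory
open scoped ENNReal

/-- Deterministic transitions of the explicit MDP on `[-1,1]`: action `a₁ = false` moves left
by `0.1` (when staying in the interval), action `a₂ = true` moves right by `0.1`. -/
noncomputable def fstep (s : ℝ) (a : Bool) : ℝ :=
  if a then (if -1 ≤ s ∧ s ≤ 0.9 then s + 0.1 else s)
  else (if -0.9 ≤ s ∧ s ≤ 1 then s - 0.1 else s)

/-- Rewards of the explicit MDP: `r(s, aᵢ) = kᵢ · s`. -/
noncomputable def rew (k₁ k₂ : ℝ) (s : ℝ) (a : Bool) : ℝ :=
  if a then k₂ * s else k₁ * s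

/-- Bellman optimality operator of the explicit deterministic MDP. -/
noncomputable def TB (k₁ k₂ γ : ℝ) (Q : ℝ → Bool → ℝ) (s : ℝ) (a : Bool) : ℝ :=
  rew k₁ k₂ s a + γ * max (Q (fstep s a) false) (Q (fstep s a) true)

/-- The measure on `[-1,1] × A`: Lebesgue on `[-1,1]` times counting measure on actions. -/
noncomputable def nu : Measure (ℝ × Bool) :=
  (volume.restrict (Set.Icc (-1 : ℝ) 1)).prod Measure.count

/-!
The Bellman equation at a state `s` only involves `Q` at `s` and at its successors
`fstep s a ∈ {s, s ± 0.1}`. Hence the countable set `B = B₀ + 0.1 ℤ` is closed under the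
dynamics, and `Q := Q* + n · 1_{Bᶜ}` still satisfies the Bellman equation on `B ⊇ B₀`.
But `B × A` is `nu`-null, so `Q - Q*` is a.e. the constant `n`, whose `L^p` norm
is `n · 4^{1/p} ≥ n`.
-/

theorem exists_int_fstep_eq (s : ℝ) (a : Bool) : ∃ j : ℤ, fstep s a = s + j * 0.1 := by
  unfold fstep
  split_ifs
  exacts [⟨1, by norm_num⟩, ⟨0, by simp⟩, ⟨-1, by norm_num; ring⟩, ⟨0, by simp⟩]

def tenthOrbit (B₀ : Set ℝ) : Set ℝ :=
  ⋃ s ∈ B₀, Set.range fun j : ℤ => s + j * 0.1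

theorem Set.Countable.tenthOrbit {B₀ : Set ℝ} (h : B₀.Countable) :
    (tenthOrbit B₀).Countable :=
  h.biUnion fun _ _ => Set.countable_range _

theorem add_int_mul_mem_tenthOrbit {B₀ : Set ℝ} {s : ℝ} (hs : s ∈ B₀) (j : ℤ) :
    s + j * 0.1 ∈ tenthOrbit B₀ :=
  Set.mem_biUnion hs ⟨j, rfl⟩

theorem subset_tenthOrbit (B₀ : Set ℝ) : B₀ ⊆ tenthOrbit B₀ := fun s hs => by
  simpa using add_int_mul_mem_tenthOrbit hs 0

theorem fstep_mem_tenthOrbit {B₀ : Set ℝ} {x : ℝ} (hx : x ∈ tenthOrbit B₀) (a : Bool) :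
    fstep x a ∈ tenthOrbit B₀ := by
  obtain ⟨s, hs, i, rfl⟩ : ∃ s ∈ B₀, ∃ i : ℤ, s + i * 0.1 = x := by
    simpa [tenthOrbit] using hx
  obtain ⟨j, hj⟩ := exists_int_fstep_eq (s + i * 0.1) a
  rw [hj, add_assoc, ← add_mul, ← Int.cast_add]
  exact add_int_mul_mem_tenthOrbit hs (i + j)

theorem TB_eq_of_eq_at_fstep {k₁ k₂ γ : ℝ} {Q Q' : ℝ → Bool → ℝ} {s : ℝ} {a : Bool}
    (h : ∀ b, Q (fstep s a) b = Q' (fstep s a) b) :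
    TB k₁ k₂ γ Q s a = TB k₁ k₂ γ Q' s a := by
  simp only [TB, h]

theorem TB_eq_self_of_eqOn {k₁ k₂ γ : ℝ} {Q Q' : ℝ → Bool → ℝ} {B : Set ℝ}
    (hB : ∀ x ∈ B, ∀ a, fstep x a ∈ B) (hQ' : ∀ s a, TB k₁ k₂ γ Q' s a = Q' s a)
    (hQ : ∀ x ∈ B, ∀ a, Q x a = Q' x a) {s : ℝ} (hs : s ∈ B) (a : Bool) :
    TB k₁ k₂ γ Q s a = Q s a := by
  rw [TB_eq_of_eq_at_fstep (hQ _ (hB s hs a)), hQ', hQ s hs]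

theorem nu_univ : nu Set.univ = 4 := by
  rw [nu, ← Set.univ_prod_univ, Measure.prod_prod, Measure.restrict_apply_univ, Real.volume_Icc,
    Measure.count_univ]
  norm_num

theorem Set.Countable.ae_prod_fst_notMem {α β : Type*} [MeasurableSpace α] [MeasurableSpace β]
    {μ : Measure α} [NullSingletonClass μ] {ν : Measure β} [SFinite ν] {B : Set α}
    (hB : B.Countable) : ∀ᵐ x ∂μ.prod ν, x.1 ∉ B :=
  Measure.QuasiMeasurePreserving.ae Measure.quasiMeasurePreserving_fst (hB.ae_notMem _)

theorem enorm_le_eLpNorm_of_ae_eq_const {α : Type*} [MeasurableSpace α] {μ : Measure α}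
    {p : ℝ≥0∞} {f : α → ℝ} {c : ℝ} (hμ : 1 ≤ μ Set.univ) (hp : p ≠ 0)
    (hf : f =ᵐ[μ] fun _ => c) : ‖c‖ₑ ≤ eLpNorm f p μ := by
  have hμ0 : μ ≠ 0 := fun h => by simp [h] at hμ
  rw [eLpNorm_congr_ae hf, eLpNorm_const _ hp hμ0]
  refine le_mul_of_one_le_right zero_le ?_
  simpa using ENNReal.rpow_le_rpow hμ (z := 1 / p.toReal) (by positivity)

theorem stmt10_general (k₁ k₂ : ℝ)
    (γ : ℝ)
    (Qstar : ℝ → Bool → ℝ)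
    (hQstarMeas : ∀ a, Measurable (fun s => Qstar s a))
    (hQstarBdd : ∃ M, ∀ s a, |Qstar s a| ≤ M)
    (hfix : ∀ s a, TB k₁ k₂ γ Qstar s a = Qstar s a) :
    ∀ B₀ : Set ℝ, B₀.Countable → B₀ ⊆ Set.Icc (-1:ℝ) 1 →
      ∀ n : ℕ, ∃ Q : ℝ → Bool → ℝ,
        (∀ a, Measurable (fun s => Q s a)) ∧ (∃ M, ∀ s a, |Q s a| ≤ M) ∧
        (∀ s ∈ B₀, ∀ a, TB k₁ k₂ γ Q s a = Q s a) ∧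
        ∀ p : ℝ≥0∞, 1 ≤ p →
          (n : ℝ≥0∞) ≤ eLpNorm (fun x : ℝ × Bool => Q x.1 x.2 - Qstar x.1 x.2) p nu := by
  intro B₀ hB₀ _ n
  set B := tenthOrbit B₀
  have hB : B.Countable := hB₀.tenthOrbit
  set bump : ℝ → ℝ := Bᶜ.indicator fun _ => (n : ℝ)
  refine ⟨fun s a => Qstar s a + bump s, fun a => ?_, ?_, ?_, fun p hp => ?_⟩
  · exact (hQstarMeas a).add (measurable_const.indicator hB.measurableSet.compl)
  · obtain ⟨M, hM⟩ := hQstarBdd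
    refine ⟨M + n, fun s a => (abs_add_le _ _).trans (add_le_add (hM s a) ?_)⟩
    by_cases hs : s ∈ B <;> simp [bump, hs]
  · exact fun s hs => TB_eq_self_of_eqOn (fun x hx => fstep_mem_tenthOrbit hx) hfix
      (fun x (hx : x ∈ B) a => by simp [bump, hx]) (subset_tenthOrbit B₀ hs)
  · have hdiff : (fun x : ℝ × Bool => Qstar x.1 x.2 + bump x.1 - Qstar x.1 x.2) =ᵐ[nu]
        fun _ => (n : ℝ) := by
      filter_upwards [show ∀ᵐ x ∂nu, x.1 ∉ B from hB.ae_prod_fst_notMem] with x hx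
      simp [bump, hx]
    simpa using
      enorm_le_eLpNorm_of_ae_eq_const (by simp [nu_univ]) (one_pos.trans_le hp).ne' hdiff

/-- Zero sampled Bellman error does not control the `L^p` distance to `Q*`: for every countable
`B₀ ⊆ [-1,1]` and every `n` there is a bounded measurable `Q` whose Bellman error vanishes on
`B₀` while `‖Q − Q*‖_{L^p} ≥ n` for every `p ∈ [1,∞]`. -/
theorem stmt10 (k₁ k₂ : ℝ) (hk₁ : 0 < k₁) (hk : k₁ ≤ k₂)
    (γ : ℝ) (hγ0 : 0 < γ) (hγ1 : γ < 1)
    (Qstar : ℝ → Bool → ℝ)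
    (hQstarMeas : ∀ a, Measurable (fun s => Qstar s a))
    (hQstarBdd : ∃ M, ∀ s a, |Qstar s a| ≤ M)
    (hfix : ∀ s a, TB k₁ k₂ γ Qstar s a = Qstar s a) :
    ∀ B₀ : Set ℝ, B₀.Countable → B₀ ⊆ Set.Icc (-1:ℝ) 1 →
      ∀ n : ℕ, ∃ Q : ℝ → Bool → ℝ,
        (∀ a, Measurable (fun s => Q s a)) ∧ (∃ M, ∀ s a, |Q s a| ≤ M) ∧
        (∀ s ∈ B₀, ∀ a, TB k₁ k₂ γ Q s a = Q s a) ∧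
        ∀ p : ℝ≥0∞, 1 ≤ p →
          (n : ℝ≥0∞) ≤ eLpNorm (fun x : ℝ × Bool => Q x.1 x.2 - Qstar x.1 x.2) p nu :=
  stmt10_general k₁ k₂ γ Qstar hQstarMeas hQstarBdd hfix
end

section
/- Sandwich bound for the CAR training objective. Let S be a set, A a nonempty finite set, d : S × A → [0, ∞) a bounded weight, B : S → Set S a perturbation map with B(s) nonempty for every s, and T, Q : S × A → ℝ bounded functions. Define L_car := sup_{(s,a)} d(s,a) · sup_{s_ν ∈ B(s)} |T(s_ν, a) − Q(s_ν, a)|, L_train := sup_{(s,a)} d(s,a) · sup_{s_ν ∈ B(s)} |T(s, a) − Q(s_ν, a)|, and L_diff := sup_{(s,a)} d(s,a) · sup_{s_ν ∈ B(s)} |T(s_ν, a) − T(s, a)|. Then |L_train − L_diff| ≤ L_car ≤ L_train + L_diff. -/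
/-!
Pointwise, the three integrands `|T sν a - Q sν a|`, `|T s a - Q sν a|` and `|T sν a - T s a|`
are the sides of a triangle with vertices `T sν a`, `T s a`, `Q sν a`, so each is at most the sum
of the other two. Since the weights are nonnegative and every integrand is bounded, this triangle
inequality survives taking the inner supremum over `B s`, multiplying by `d`, and taking the outer
supremum, which gives `Lcar ≤ Ltrain + Ldiff`, `Ltrain ≤ Lcar + Ldiff` and `Ldiff ≤ Lcar + Ltrain`.
-/

open Set

namespace Real

variable {ι σ : Type*}

lemma le_biSup_of_bddAbove {f : σ → ℝ} {B : Set σ} (hf : BddAbove (f '' B)) {x : σ}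
    (hx : x ∈ B) : f x ≤ ⨆ y ∈ B, f y := by
  obtain ⟨C, hC⟩ := hf
  refine le_ciSup_of_le ⟨max C 0, ?_⟩ x (ciSup_pos (f := fun _ => f x) hx).ge
  rintro _ ⟨y, rfl⟩
  exact Real.iSup_le (fun hy => (hC ⟨y, hy, rfl⟩).trans (le_max_left _ _)) (le_max_right _ _)

-- `0 ≤ a` is needed since `⨆` of an empty family in `ℝ` is `0`.
lemma biSup_le_of_nonneg {f : σ → ℝ} {B : Set σ} {a : ℝ} (h : ∀ x ∈ B, f x ≤ a) (ha : 0 ≤ a) :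
    ⨆ x ∈ B, f x ≤ a :=
  Real.iSup_le (fun x => Real.iSup_le (h x) ha) ha

lemma biSup_nonneg {f : σ → ℝ} {B : Set σ} (hf : ∀ x ∈ B, 0 ≤ f x) : 0 ≤ ⨆ x ∈ B, f x :=
  Real.iSup_nonneg fun x => Real.iSup_nonneg (hf x)

lemma iSup_le_iSup_add_iSup {u v w : ι → ℝ} (hv : BddAbove (range v)) (hw : BddAbove (range w))
    (hv0 : ∀ i, 0 ≤ v i) (hw0 : ∀ i, 0 ≤ w i) (h : ∀ i, u i ≤ v i + w i) :
    ⨆ i, u i ≤ (⨆ i, v i) + ⨆ i, w i :=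
  Real.iSup_le (fun i => (h i).trans (add_le_add (le_ciSup hv i) (le_ciSup hw i)))
    (add_nonneg (Real.iSup_nonneg hv0) (Real.iSup_nonneg hw0))

lemma biSup_le_biSup_add_biSup {f g h : σ → ℝ} {B : Set σ} (hg : BddAbove (g '' B))
    (hh : BddAbove (h '' B)) (hg0 : ∀ x ∈ B, 0 ≤ g x) (hh0 : ∀ x ∈ B, 0 ≤ h x)
    (hfgh : ∀ x ∈ B, f x ≤ g x + h x) :
    ⨆ x ∈ B, f x ≤ (⨆ x ∈ B, g x) + ⨆ x ∈ B, h x :=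
  biSup_le_of_nonneg
    (fun x hx => (hfgh x hx).trans
      (add_le_add (le_biSup_of_bddAbove hg hx) (le_biSup_of_bddAbove hh hx)))
    (add_nonneg (biSup_nonneg hg0) (biSup_nonneg hh0))

end Real

section WeightedAdversarialSup

variable {ι σ : Type*}

/-- `⨆ i, d i * ⨆ x ∈ B i, φ i x`: the common shape of `L_car`, `L_train` and `L_diff`, with
`i = (s, a)` and `x = sν`. -/
noncomputable def weightedAdversarialSup (d : ι → ℝ) (B : ι → Set σ) (φ : ι → σ → ℝ) : ℝ :=
  ⨆ i, d i * ⨆ x ∈ B i, φ i x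

lemma bddAbove_range_weighted_biSup {d : ι → ℝ} {B : ι → Set σ} {φ : ι → σ → ℝ}
    (hd0 : ∀ i, 0 ≤ d i) (hd : BddAbove (range d)) (hφ0 : ∀ i x, 0 ≤ φ i x)
    (hφ : ∃ C, ∀ i x, φ i x ≤ C) :
    BddAbove (range fun i => d i * ⨆ x ∈ B i, φ i x) := by
  obtain ⟨M, hM⟩ := hd
  obtain ⟨C, hC⟩ := hφ
  refine ⟨M * max C 0, ?_⟩
  rintro _ ⟨i, rfl⟩
  have hdM : d i ≤ M := hM ⟨i, rfl⟩
  exact mul_le_mul hdM (Real.biSup_le_of_nonneg (fun x _ => (hC i x).trans (le_max_left _ _))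
    (le_max_right _ _)) (Real.biSup_nonneg fun x _ => hφ0 i x) ((hd0 i).trans hdM)

lemma weightedAdversarialSup_le_add {d : ι → ℝ} {B : ι → Set σ} {φ ψ χ : ι → σ → ℝ}
    (hd0 : ∀ i, 0 ≤ d i) (hd : BddAbove (range d))
    (hψ0 : ∀ i x, 0 ≤ ψ i x) (hχ0 : ∀ i x, 0 ≤ χ i x)
    (hψ : ∃ C, ∀ i x, ψ i x ≤ C) (hχ : ∃ C, ∀ i x, χ i x ≤ C)
    (htri : ∀ i, ∀ x ∈ B i, φ i x ≤ ψ i x + χ i x) :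
    weightedAdversarialSup d B φ ≤ weightedAdversarialSup d B ψ + weightedAdversarialSup d B χ := by
  refine Real.iSup_le_iSup_add_iSup (bddAbove_range_weighted_biSup hd0 hd hψ0 hψ)
    (bddAbove_range_weighted_biSup hd0 hd hχ0 hχ) (fun i => ?_) (fun i => ?_) (fun i => ?_)
  · exact mul_nonneg (hd0 i) (Real.biSup_nonneg fun x _ => hψ0 i x)
  · exact mul_nonneg (hd0 i) (Real.biSup_nonneg fun x _ => hχ0 i x)
  · obtain ⟨Cψ, hCψ⟩ := hψ
    obtain ⟨Cχ, hCχ⟩ := hχ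
    rw [← mul_add]
    exact mul_le_mul_of_nonneg_left
      (Real.biSup_le_biSup_add_biSup ⟨Cψ, by rintro _ ⟨x, -, rfl⟩; exact hCψ i x⟩
        ⟨Cχ, by rintro _ ⟨x, -, rfl⟩; exact hCχ i x⟩
        (fun x _ => hψ0 i x) (fun x _ => hχ0 i x) (htri i)) (hd0 i)

lemma weightedAdversarialSup_abs_sub_comm (d : ι → ℝ) (B : ι → Set σ) (f g : ι → σ → ℝ) :
    weightedAdversarialSup d B (fun i x => |f i x - g i x|) =
      weightedAdversarialSup d B (fun i x => |g i x - f i x|) := by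
  simp only [abs_sub_comm]

lemma exists_abs_sub_le_of_exists_abs_le {f g : ι → σ → ℝ} (hf : ∃ C, ∀ i x, |f i x| ≤ C)
    (hg : ∃ C, ∀ i x, |g i x| ≤ C) : ∃ C, ∀ i x, |f i x - g i x| ≤ C := by
  obtain ⟨Cf, hCf⟩ := hf
  obtain ⟨Cg, hCg⟩ := hg
  exact ⟨Cf + Cg, fun i x => (abs_sub _ _).trans (add_le_add (hCf i x) (hCg i x))⟩

lemma weightedAdversarialSup_abs_sub_le {d : ι → ℝ} {B : ι → Set σ} {f g h : ι → σ → ℝ}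
    (hd0 : ∀ i, 0 ≤ d i) (hd : BddAbove (range d)) (hf : ∃ C, ∀ i x, |f i x| ≤ C)
    (hg : ∃ C, ∀ i x, |g i x| ≤ C) (hh : ∃ C, ∀ i x, |h i x| ≤ C) :
    weightedAdversarialSup d B (fun i x => |f i x - h i x|) ≤
      weightedAdversarialSup d B (fun i x => |f i x - g i x|) +
        weightedAdversarialSup d B (fun i x => |g i x - h i x|) :=
  weightedAdversarialSup_le_add hd0 hd (fun _ _ => abs_nonneg _) (fun _ _ => abs_nonneg _)
    (exists_abs_sub_le_of_exists_abs_le hf hg) (exists_abs_sub_le_of_exists_abs_le hg hh) (fun _ _ _ => abs_sub_le _ _ _)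

end WeightedAdversarialSup

theorem stmt15_general {S A : Type*}
    (d : S → A → ℝ) (hd0 : ∀ s a, 0 ≤ d s a) (hdb : ∃ M, ∀ s a, d s a ≤ M)
    (B : S → Set S)
    (T Q : S → A → ℝ)
    (hT : ∃ M, ∀ s a, |T s a| ≤ M) (hQ : ∃ M, ∀ s a, |Q s a| ≤ M)
    (Lcar Ltrain Ldiff : ℝ)
    (hLcar : Lcar = ⨆ p : S × A, d p.1 p.2 * ⨆ sν ∈ B p.1, |T sν p.2 - Q sν p.2|)
    (hLtrain : Ltrain = ⨆ p : S × A, d p.1 p.2 * ⨆ sν ∈ B p.1, |T p.1 p.2 - Q sν p.2|)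
    (hLdiff : Ldiff = ⨆ p : S × A, d p.1 p.2 * ⨆ sν ∈ B p.1, |T sν p.2 - T p.1 p.2|) :
    |Ltrain - Ldiff| ≤ Lcar ∧ Lcar ≤ Ltrain + Ldiff := by
  obtain ⟨M, hM⟩ := hdb
  have hd : BddAbove (range fun p : S × A => d p.1 p.2) :=
    ⟨M, by rintro _ ⟨p, rfl⟩; exact hM p.1 p.2⟩
  let Tν : S × A → S → ℝ := fun p sν => T sν p.2
  let Ts : S × A → S → ℝ := fun p _ => T p.1 p.2
  let Qν : S × A → S → ℝ := fun p sν => Q sν p.2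
  have hTν : ∃ C, ∀ p sν, |Tν p sν| ≤ C := hT.imp fun _ h p sν => h sν p.2
  have hTs : ∃ C, ∀ p sν, |Ts p sν| ≤ C := hT.imp fun _ h p _ => h p.1 p.2
  have hQν : ∃ C, ∀ p sν, |Qν p sν| ≤ C := hQ.imp fun _ h p sν => h sν p.2
  let W := weightedAdversarialSup (fun p : S × A => d p.1 p.2) (fun p => B p.1)
  have hcar : Lcar = W (fun p sν => |Tν p sν - Qν p sν|) := hLcar
  have htrain : Ltrain = W (fun p sν => |Ts p sν - Qν p sν|) := hLtrain
  have hdiff : Ldiff = W (fun p sν => |Tν p sν - Ts p sν|) := hLdiff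
  have hd0' : ∀ p : S × A, 0 ≤ d p.1 p.2 := fun p => hd0 p.1 p.2
  have car_le : Lcar ≤ Ldiff + Ltrain := by
    rw [hcar, htrain, hdiff]
    exact weightedAdversarialSup_abs_sub_le hd0' hd hTν hTs hQν
  have train_le : Ltrain ≤ Ldiff + Lcar := by
    rw [hcar, htrain, hdiff.trans (weightedAdversarialSup_abs_sub_comm _ _ _ _)]
    exact weightedAdversarialSup_abs_sub_le hd0' hd hTs hTν hQν
  have diff_le : Ldiff ≤ Lcar + Ltrain := by
    rw [hcar, htrain.trans (weightedAdversarialSup_abs_sub_comm _ _ _ _), hdiff]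
    exact weightedAdversarialSup_abs_sub_le hd0' hd hTν hQν hTs
  exact ⟨abs_sub_le_iff.mpr ⟨by linarith, by linarith⟩, by linarith⟩

/-- Sandwich bound for the CAR training objective:
`|L_train − L_diff| ≤ L_car ≤ L_train + L_diff`. -/
theorem stmt15 {S A : Type*} [Fintype A] [Nonempty A]
    (d : S → A → ℝ) (hd0 : ∀ s a, 0 ≤ d s a) (hdb : ∃ M, ∀ s a, d s a ≤ M)
    (B : S → Set S) (hB : ∀ s, (B s).Nonempty)
    (T Q : S → A → ℝ)
    (hT : ∃ M, ∀ s a, |T s a| ≤ M) (hQ : ∃ M, ∀ s a, |Q s a| ≤ M)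
    (Lcar Ltrain Ldiff : ℝ)
    (hLcar : Lcar = ⨆ p : S × A, d p.1 p.2 * ⨆ sν ∈ B p.1, |T sν p.2 - Q sν p.2|)
    (hLtrain : Ltrain = ⨆ p : S × A, d p.1 p.2 * ⨆ sν ∈ B p.1, |T p.1 p.2 - Q sν p.2|)
    (hLdiff : Ldiff = ⨆ p : S × A, d p.1 p.2 * ⨆ sν ∈ B p.1, |T sν p.2 - T p.1 p.2|) :
    |Ltrain - Ldiff| ≤ Lcar ∧ Lcar ≤ Ltrain + Ldiff :=
  stmt15_general d hd0 hdb B T Q hT hQ Lcar Ltrain Ldiff hLcar hLtrain hLdiff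
end

section
/- Robustness guarantee under infinity measurement error. Let (X, dist) be a metric space (the state space), A a nonempty finite set, and Q* : X → A → ℝ. Let φ, π : X → A → ℝ be such that for every s, φ(s,·) and π(s,·) are probability vectors on A and π(s,a) > 0 for all a. Let μ : X → ℝ with μ(s) > 0 for all s, and let δ > 0, ε > 0. Assume: (H1) μ(s) · KL(φ(s,·) ‖ π(s,·)) ≤ δ for every s; (H2) for every s, Argmax(φ, s) = Argmax(Q*, s). Define S_δ := {s : ∃ a ≠ a' in A with |φ(s,a) − φ(s,a')| ≤ 2√(2δ/μ(s))}. Then: (i) {s : some maximizer a of π(s,·) satisfies Q*(s,a) < max_{a'} Q*(s,a')} ⊆ S_δ; (ii) {s : ∃ s_ν with dist(s_ν, s) ≤ ε and some maximizer a of π(s_ν,·) with Q*(s,a) < max_{a'} Q*(s,a')} ⊆ {s : ∃ x ∈ S_δ with dist(s, x) ≤ ε} ∪ {s : ∃ s_ν with dist(s_ν, s) ≤ ε and Argmax(Q*, s_ν) ⊄ Argmax(Q*, s)}. -/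
/-- Kullback–Leibler divergence of probability vectors on a finite set
(with the convention `0 · log 0 = 0`, automatic since `Real.log 0 = 0`). -/
noncomputable def KLfin {A : Type*} [Fintype A] (p q : A → ℝ) : ℝ :=
  ∑ a, p a * Real.log (p a / q a)

open Finset Real

/-- Pointwise form of `KL ≥ squared Hellinger distance`, from `log x ≤ x - 1` at `x = √(q/p)`. -/
lemma sub_add_sq_sqrt_sub_sqrt_le_mul_log_div {p q : ℝ} (hp : 0 ≤ p) (hq : 0 < q) :
    p - q + (√p - √q) ^ 2 ≤ p * log (p / q) := by
  rcases hp.eq_or_lt with rfl | hp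
  · simp [sq_sqrt hq.le]
  have hlog : log (√q / √p) ≤ √q / √p - 1 := log_le_sub_one_of_pos (by positivity)
  have hsplit : log (p / q) = -2 * log (√q / √p) := by
    rw [log_div hp.ne' hq.ne', log_div (sqrt_pos.2 hq).ne' (sqrt_pos.2 hp).ne',
      log_sqrt hq.le, log_sqrt hp.le]
    ring
  have hcancel : p * (√q / √p) = √p * √q := by
    field_simp [(sqrt_pos.2 hp).ne']
    rw [sq_sqrt hp.le]
  calc p - q + (√p - √q) ^ 2 = -2 * p * (√q / √p - 1) := by
        rw [sub_sq, sq_sqrt hp.le, sq_sqrt hq.le]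
        linear_combination 2 * hcancel
    _ ≤ -2 * p * log (√q / √p) := mul_le_mul_of_nonpos_left hlog (by linarith)
    _ = p * log (p / q) := by rw [hsplit]; ring

section ProbabilityVectors

variable {A : Type*} [Fintype A] {p q : A → ℝ}

lemma sum_sq_sqrt_sub_sqrt_le_KLfin (hp : ∀ a, 0 ≤ p a) (hq : ∀ a, 0 < q a)
    (hpq : ∑ a, p a = ∑ a, q a) : ∑ a, (√(p a) - √(q a)) ^ 2 ≤ KLfin p q := by
  have h := sum_le_sum fun a (_ : a ∈ univ) =>
    sub_add_sq_sqrt_sub_sqrt_le_mul_log_div (hp a) (hq a)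
  rwa [sum_add_distrib, sum_sub_distrib, hpq, sub_self, zero_add] at h

lemma KLfin_nonneg (hp : ∀ a, 0 ≤ p a) (hq : ∀ a, 0 < q a)
    (hpq : ∑ a, p a = ∑ a, q a) : 0 ≤ KLfin p q :=
  (sum_nonneg fun _ _ => sq_nonneg _).trans (sum_sq_sqrt_sub_sqrt_le_KLfin hp hq hpq)

/-- Cauchy–Schwarz on `|p - q| = |√p - √q| (√p + √q)`, with `∑ (√p + √q)² ≤ 2 ∑ (p + q) = 4`. -/
lemma sum_abs_sub_le_two_mul_sqrt_KLfin (hp : ∀ a, 0 ≤ p a) (hp1 : ∑ a, p a = 1)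
    (hq : ∀ a, 0 < q a) (hq1 : ∑ a, q a = 1) :
    ∑ a, |p a - q a| ≤ 2 * √(KLfin p q) := by
  have hfactor : ∀ a, |p a - q a| = |√(p a) - √(q a)| * (√(p a) + √(q a)) := fun a => by
    conv_lhs => rw [← sq_sqrt (hp a), ← sq_sqrt (hq a).le]
    rw [sq_sub_sq, abs_mul, abs_of_nonneg (by positivity : 0 ≤ √(p a) + √(q a)), mul_comm]
  have hsum_sq : ∑ a, (√(p a) + √(q a)) ^ 2 ≤ 4 := by
    calc ∑ a, (√(p a) + √(q a)) ^ 2 ≤ ∑ a, 2 * (p a + q a) := by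
          refine sum_le_sum fun a _ => ?_
          nlinarith [sq_nonneg (√(p a) - √(q a)), sq_sqrt (hp a), sq_sqrt (hq a).le]
      _ = 4 := by rw [← mul_sum, sum_add_distrib, hp1, hq1]; norm_num
  calc ∑ a, |p a - q a|
      = ∑ a, |√(p a) - √(q a)| * (√(p a) + √(q a)) := sum_congr rfl fun a _ => hfactor a
    _ ≤ √(∑ a, |√(p a) - √(q a)| ^ 2) * √(∑ a, (√(p a) + √(q a)) ^ 2) :=
        sum_mul_le_sqrt_mul_sqrt _ _ _
    _ ≤ √(KLfin p q) * √4 := by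
        simp only [sq_abs]
        gcongr
        exact sum_sq_sqrt_sub_sqrt_le_KLfin hp hq (hp1.trans hq1.symm)
    _ = 2 * √(KLfin p q) := by
        rw [show (4 : ℝ) = 2 ^ 2 by norm_num, sqrt_sq zero_le_two, mul_comm]

lemma le_of_sum_abs_sub_le_of_gap {t : ℝ} (hpq : ∑ a, |p a - q a| ≤ t)
    (hgap : ∀ a a', a ≠ a' → t < |p a - p a'|) {a : A} (ha : ∀ a', q a' ≤ q a) (a' : A) :
    p a' ≤ p a := by
  classical
  by_contra! hlt
  have hne : a' ≠ a := by rintro rfl; exact lt_irrefl _ hlt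
  have hpair : |p a' - q a'| + |p a - q a| ≤ t := by
    rw [← sum_pair (f := fun b => |p b - q b|) hne]
    exact (sum_le_sum_of_subset_of_nonneg (subset_univ _) fun _ _ _ => abs_nonneg _).trans hpq
  have hwide := hgap a' a hne
  rw [abs_of_pos (sub_pos.2 hlt)] at hwide
  linarith [le_abs_self (p a' - q a'), neg_abs_le (p a - q a), ha a']

lemma le_of_KLfin_le_of_gap (hp : ∀ a, 0 ≤ p a) (hp1 : ∑ a, p a = 1)
    (hq : ∀ a, 0 < q a) (hq1 : ∑ a, q a = 1) {t : ℝ} (hKL : KLfin p q ≤ t)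
    (hgap : ∀ a a', a ≠ a' → 2 * √(2 * t) < |p a - p a'|) {a : A} (ha : ∀ a', q a' ≤ q a) :
    ∀ a', p a' ≤ p a := by
  have hKL_two : KLfin p q ≤ 2 * t := by
    linarith [KLfin_nonneg hp hq (hp1.trans hq1.symm)]
  refine le_of_sum_abs_sub_le_of_gap ?_ hgap ha
  calc ∑ a, |p a - q a| ≤ 2 * √(KLfin p q) := sum_abs_sub_le_two_mul_sqrt_KLfin hp hp1 hq hq1
    _ ≤ 2 * √(2 * t) := by gcongr

end ProbabilityVectors

lemma iSup_le_of_mem_Amax {X A : Type*} {Q : X → A → ℝ} {s : X} {a : A}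
    (ha : a ∈ Amax Q s) : ⨆ a', Q s a' ≤ Q s a :=
  haveI : Nonempty A := ⟨a⟩
  ciSup_le ha

theorem stmt17_general {X : Type*} [MetricSpace X] {A : Type*} [Fintype A]
    (Qstar φ pol : X → A → ℝ)
    (hφprob : ∀ s, (∀ a, 0 ≤ φ s a) ∧ ∑ a, φ s a = 1)
    (hpolprob : ∀ s, (∀ a, 0 < pol s a) ∧ ∑ a, pol s a = 1)
    (μ : X → ℝ) (hμ : ∀ s, 0 < μ s)
    (δ ε : ℝ)
    (H1 : ∀ s, μ s * KLfin (φ s) (pol s) ≤ δ)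
    (H2 : ∀ s, Amax φ s = Amax Qstar s)
    (Sδ : Set X)
    (hSδ : Sδ = {s | ∃ a a', a ≠ a' ∧ |φ s a - φ s a'| ≤ 2 * Real.sqrt (2 * δ / μ s)}) :
    {s | ∃ a, (∀ a', pol s a' ≤ pol s a) ∧ Qstar s a < ⨆ a', Qstar s a'} ⊆ Sδ ∧
    {s | ∃ sν, dist sν s ≤ ε ∧
        ∃ a, (∀ a', pol sν a' ≤ pol sν a) ∧ Qstar s a < ⨆ a', Qstar s a'} ⊆
      {s | ∃ x ∈ Sδ, dist s x ≤ ε} ∪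
      {s | ∃ sν, dist sν s ≤ ε ∧ ¬ Amax Qstar sν ⊆ Amax Qstar s} := by
  have greedy : ∀ s ∉ Sδ, ∀ a, (∀ a', pol s a' ≤ pol s a) → a ∈ Amax Qstar s := by
    intro s hs a ha
    simp only [hSδ, Set.mem_ofPred_eq, not_exists, not_and, not_le] at hs
    rw [← H2 s]
    refine le_of_KLfin_le_of_gap (hφprob s).1 (hφprob s).2 (hpolprob s).1 (hpolprob s).2
      (t := δ / μ s) ?_ (by simpa only [mul_div_assoc] using hs) ha
    rw [le_div_iff₀ (hμ s), mul_comm]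
    exact H1 s
  refine ⟨fun s ⟨a, ha, hlt⟩ => ?_, fun s ⟨sν, hdist, a, ha, hlt⟩ => ?_⟩
  · by_contra hs
    exact (iSup_le_of_mem_Amax (greedy s hs a ha)).not_gt hlt
  · by_cases hν : sν ∈ Sδ
    · exact Or.inl ⟨sν, hν, by rwa [dist_comm]⟩
    · refine Or.inr ⟨sν, hdist, fun hsub => ?_⟩
      exact (iSup_le_of_mem_Amax (hsub (greedy sν hν a ha))).not_gt hlt

/-- Robustness guarantee under infinity measurement error: if
`μ(s) · KL(φ(s,·) ‖ π(s,·)) ≤ δ` everywhere and `φ` is greedy-consistent with `Q*`, then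
(i) the naturally suboptimal state set of `π` is contained in `S_δ`, and (ii) the
`ε`-adversarial state set of `π` is contained in the `ε`-dilation of `S_δ` together with
states whose `ε`-neighborhood leaves the intrinsic (argmax-consistent) region. -/
theorem stmt17 {X : Type*} [MetricSpace X] {A : Type*} [Fintype A] [Nonempty A]
    (Qstar φ pol : X → A → ℝ)
    (hφprob : ∀ s, (∀ a, 0 ≤ φ s a) ∧ ∑ a, φ s a = 1)
    (hpolprob : ∀ s, (∀ a, 0 < pol s a) ∧ ∑ a, pol s a = 1)
    (μ : X → ℝ) (hμ : ∀ s, 0 < μ s)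
    (δ ε : ℝ) (hδ : 0 < δ) (hε : 0 < ε)
    (H1 : ∀ s, μ s * KLfin (φ s) (pol s) ≤ δ)
    (H2 : ∀ s, Amax φ s = Amax Qstar s)
    (Sδ : Set X)
    (hSδ : Sδ = {s | ∃ a a', a ≠ a' ∧ |φ s a - φ s a'| ≤ 2 * Real.sqrt (2 * δ / μ s)}) :
    {s | ∃ a, (∀ a', pol s a' ≤ pol s a) ∧ Qstar s a < ⨆ a', Qstar s a'} ⊆ Sδ ∧
    {s | ∃ sν, dist sν s ≤ ε ∧
        ∃ a, (∀ a', pol sν a' ≤ pol sν a) ∧ Qstar s a < ⨆ a', Qstar s a'} ⊆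
      {s | ∃ x ∈ Sδ, dist s x ≤ ε} ∪
      {s | ∃ sν, dist sν s ≤ ε ∧ ¬ Amax Qstar sν ⊆ Amax Qstar s} :=
  stmt17_general Qstar φ pol hφprob hpolprob μ hμ δ ε H1 H2 Sδ hSδ
end

section
/- Vulnerability of non-infinity measurement errors. Let S = [−1/2, 1/2] with Lebesgue measure, A = {a₁, a₂}, and define the optimal action a*(s) := a₁ for s ∈ [0, 1/2] and a*(s) := a₂ for s ∈ [−1/2, 0). Let φ : S → A → ℝ be measurable with φ(s,·) a probability vector for each s and φ(s, a*(s)) > φ(s, a) for the other action a, for every s. Then for every ε > 0, every k ∈ [1, ∞), and every δ > 0, there exists a measurable π : S → A → ℝ with π(s,·) a strictly positive probability vector for each s, such that: (a) ( ∫_{−1/2}^{1/2} KL(φ(s,·) ‖ π(s,·))^k ds )^{1/k} ≤ δ; (b) the Lebesgue measure of {s : a*(s) is not the unique maximizer of π(s,·)} is at most δ; yet (c) for every s ∈ [−1/2, 1/2] there exists s_ν ∈ [−1/2, 1/2] with |s_ν − s| ≤ ε such that some maximizer a of π(s_ν,·) satisfies a ≠ a*(s). In particular the adversarial state set of π is all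 of S although the k-measurement error and the naturally suboptimal set are arbitrarily small. -/
/-!
Mix `φ` with the uniform policy, giving `φ` the weight `e^{-δ}`, except on the rationals, where the
policy is exactly uniform. Off the rationals every action keeps at least the fraction `e^{-δ}` of
its `φ`-probability, so the KL error is at most `δ` pointwise and hence its `L^k` norm on the
unit-length interval is at most `δ`; the greedy action there is still `a*`. The rationals are
null, so neither the error nor the naturally suboptimal set sees them, but they are dense, and at
a rational state every action, in particular the wrong one, is a maximizer.
-/

open MeasureTheory
open scoped ENNReal

/-- The optimal action on `[-1/2, 1/2]`: `a₁ = true` for `s ≥ 0`, `a₂ = false` for `s < 0`. -/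
noncomputable def astar (s : ℝ) : Bool := if 0 ≤ s then true else false

section KullbackLeibler

variable {α : Type*} [Fintype α] {p q : α → ℝ}

lemma sub_le_mul_log_div {x y : ℝ} (hx : 0 ≤ x) (hy : 0 < y) :
    x - y ≤ x * Real.log (x / y) := by
  rcases hx.eq_or_lt with rfl | hx
  · simpa using hy.le
  · have hlog := Real.one_sub_inv_le_log_of_pos (div_pos hx hy)
    rw [inv_div] at hlog
    calc x - y = x * (1 - y / x) := by field_simp
      _ ≤ x * Real.log (x / y) := mul_le_mul_of_nonneg_left hlog hx.le

lemma sum_mul_log_div_nonneg (hp : ∀ a, 0 ≤ p a) (hq : ∀ a, 0 < q a)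
    (hqp : ∑ a, q a ≤ ∑ a, p a) : 0 ≤ ∑ a, p a * Real.log (p a / q a) :=
  calc 0 ≤ ∑ a, (p a - q a) := by rw [Finset.sum_sub_distrib]; linarith
    _ ≤ _ := Finset.sum_le_sum fun a _ => sub_le_mul_log_div (hp a) (hq a)

lemma sum_mul_log_div_le_neg_log (hp : ∀ a, 0 ≤ p a) (hp1 : ∑ a, p a = 1) {c : ℝ} (hc : 0 < c)
    (hcpq : ∀ a, c * p a ≤ q a) : ∑ a, p a * Real.log (p a / q a) ≤ -Real.log c := by
  have hterm : ∀ a, p a * Real.log (p a / q a) ≤ p a * -Real.log c := by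
    intro a
    rcases (hp a).eq_or_lt with h | h
    · simp [← h]
    · have hq : 0 < q a := (mul_pos hc h).trans_le (hcpq a)
      refine mul_le_mul_of_nonneg_left ?_ h.le
      rw [← Real.log_inv]
      refine Real.log_le_log (div_pos h hq) ?_
      rw [div_le_iff₀ hq, le_inv_mul_iff₀ hc]
      exact hcpq a
  calc ∑ a, p a * Real.log (p a / q a) ≤ ∑ a, p a * -Real.log c :=
        Finset.sum_le_sum fun a _ => hterm a
    _ = -Real.log c := by rw [← Finset.sum_mul, hp1, one_mul]

end KullbackLeibler

section MixUniform

variable {α : Type*} [Fintype α] {p : α → ℝ} {c : ℝ}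

noncomputable def mixUniform (c : ℝ) (p : α → ℝ) (a : α) : ℝ :=
  c * p a + (1 - c) / Fintype.card α

lemma mul_le_mixUniform (hc : c ≤ 1) (a : α) : c * p a ≤ mixUniform c p a := by
  unfold mixUniform
  have : 0 ≤ (1 - c) / Fintype.card α := div_nonneg (by linarith) (Nat.cast_nonneg _)
  linarith

lemma mixUniform_lt_mixUniform (hc : 0 < c) {a b : α} (h : p a < p b) :
    mixUniform c p a < mixUniform c p b := by
  unfold mixUniform
  gcongr

lemma mixUniform_zero (p : α → ℝ) (a b : α) : mixUniform 0 p a = mixUniform 0 p b := by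
  simp [mixUniform]

variable [Nonempty α]

lemma mixUniform_pos (hp : ∀ a, 0 ≤ p a) (hc0 : 0 ≤ c) (hc1 : c < 1) (a : α) :
    0 < mixUniform c p a := by
  unfold mixUniform
  have : 0 < (1 - c) / Fintype.card α := div_pos (by linarith) (by exact_mod_cast Fintype.card_pos)
  nlinarith [hp a]

lemma sum_mixUniform (hp1 : ∑ a, p a = 1) : ∑ a, mixUniform c p a = 1 := by
  have hcard : (Fintype.card α : ℝ) ≠ 0 := by exact_mod_cast Fintype.card_ne_zero
  simp only [mixUniform, Finset.sum_add_distrib, ← Finset.mul_sum, hp1, Finset.sum_const,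
    Finset.card_univ, nsmul_eq_mul, mul_div_cancel₀ _ hcard]
  ring

end MixUniform

section SmoothedPolicy

variable {α : Type*} [Fintype α] {φ : ℝ → α → ℝ} {δ s : ℝ}

open Classical in
noncomputable def rationalsUniformWeight (δ s : ℝ) : ℝ :=
  if s ∈ Set.range ((↑) : ℚ → ℝ) then 0 else Real.exp (-δ)

noncomputable def smoothedPolicy (δ : ℝ) (φ : ℝ → α → ℝ) (s : ℝ) : α → ℝ :=
  mixUniform (rationalsUniformWeight δ s) (φ s)

lemma rationalsUniformWeight_nonneg : 0 ≤ rationalsUniformWeight δ s := by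
  unfold rationalsUniformWeight
  split_ifs <;> positivity

lemma rationalsUniformWeight_lt_one (hδ : 0 < δ) : rationalsUniformWeight δ s < 1 := by
  unfold rationalsUniformWeight
  split_ifs
  · exact one_pos
  · exact Real.exp_lt_one_iff.2 (neg_lt_zero.2 hδ)

lemma rationalsUniformWeight_of_notMem (hs : s ∉ Set.range ((↑) : ℚ → ℝ)) :
    rationalsUniformWeight δ s = Real.exp (-δ) :=
  if_neg hs

lemma measurable_smoothedPolicy (hφ : ∀ a, Measurable fun s => φ s a) (a : α) :
    Measurable fun s => smoothedPolicy δ φ s a := by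
  have hw : Measurable (rationalsUniformWeight δ) :=
    Measurable.ite (Set.countable_range _).measurableSet measurable_const measurable_const
  exact (hw.mul (hφ a)).add ((measurable_const.sub hw).div_const _)

lemma smoothedPolicy_rat (δ : ℝ) (φ : ℝ → α → ℝ) (q : ℚ) (a b : α) :
    smoothedPolicy δ φ q a = smoothedPolicy δ φ q b := by
  have hw : rationalsUniformWeight δ q = 0 := if_pos ⟨q, rfl⟩
  simp only [smoothedPolicy, hw, mixUniform_zero _ a b]

lemma smoothedPolicy_lt_smoothedPolicy (hs : s ∉ Set.range ((↑) : ℚ → ℝ)) {a b : α}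
    (h : φ s a < φ s b) : smoothedPolicy δ φ s a < smoothedPolicy δ φ s b := by
  unfold smoothedPolicy
  rw [rationalsUniformWeight_of_notMem hs]
  exact mixUniform_lt_mixUniform (Real.exp_pos _) h

lemma sum_mul_log_div_smoothedPolicy_le (hδ : 0 ≤ δ) (hp : ∀ a, 0 ≤ φ s a)
    (hp1 : ∑ a, φ s a = 1) (hs : s ∉ Set.range ((↑) : ℚ → ℝ)) :
    ∑ a, φ s a * Real.log (φ s a / smoothedPolicy δ φ s a) ≤ δ := by
  have hc : Real.exp (-δ) ≤ 1 := Real.exp_le_one_iff.2 (neg_nonpos.2 hδ)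
  have hmix : ∀ a, Real.exp (-δ) * φ s a ≤ smoothedPolicy δ φ s a := by
    intro a
    rw [smoothedPolicy, rationalsUniformWeight_of_notMem hs]
    exact mul_le_mixUniform hc a
  simpa using sum_mul_log_div_le_neg_log hp hp1 (Real.exp_pos _) hmix

end SmoothedPolicy

lemma rpow_integral_rpow_le {Ω : Type*} [MeasurableSpace Ω] {μ : Measure Ω}
    [IsProbabilityMeasure μ] {f : Ω → ℝ} {C k : ℝ} (hk : 0 < k) (hf0 : 0 ≤ᵐ[μ] f)
    (hfC : ∀ᵐ x ∂μ, f x ≤ C) : (∫ x, f x ^ k ∂μ) ^ (1 / k) ≤ C := by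
  obtain ⟨x, hx0, hxC⟩ := (hf0.and hfC).exists
  have hC : 0 ≤ C := (show (0 : ℝ) ≤ f x from hx0).trans hxC
  have hfk0 : 0 ≤ᵐ[μ] fun x => f x ^ k := by
    filter_upwards [hf0] with x hx
    exact Real.rpow_nonneg hx k
  have hfkC : ∀ᵐ x ∂μ, f x ^ k ≤ C ^ k := by
    filter_upwards [hf0, hfC] with x hx0 hxC
    exact Real.rpow_le_rpow hx0 hxC hk.le
  calc (∫ x, f x ^ k ∂μ) ^ (1 / k) ≤ (∫ _, C ^ k ∂μ) ^ (1 / k) :=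
        Real.rpow_le_rpow (integral_nonneg_of_ae hfk0)
          (integral_mono_of_nonneg hfk0 (integrable_const _) hfkC) (by positivity)
    _ = C := by
        rw [integral_const, probReal_univ, one_smul, ← Real.rpow_mul hC, mul_one_div_cancel hk.ne',
          Real.rpow_one]

lemma isProbabilityMeasure_restrict_Icc {a b : ℝ} (hab : b - a = 1) :
    IsProbabilityMeasure (volume.restrict (Set.Icc a b)) :=
  ⟨by rw [Measure.restrict_apply_univ, Real.volume_Icc, hab, ENNReal.ofReal_one]⟩

lemma Dense.exists_mem_Icc_abs_sub_le {D : Set ℝ} (hD : Dense D) {a b s ε : ℝ} (hab : a < b)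
    (hs : s ∈ Set.Icc a b) (hε : 0 < ε) : ∃ x ∈ D, x ∈ Set.Icc a b ∧ |x - s| ≤ ε := by
  have hcl : s ∈ closure (Set.Ioo a b ∩ D) := by
    rw [← closure_Ioo hab.ne] at hs
    exact closure_minimal (hD.open_subset_closure_inter isOpen_Ioo) isClosed_closure hs
  obtain ⟨x, ⟨hxab, hxD⟩, hdist⟩ := Metric.mem_closure_iff.1 hcl ε hε
  refine ⟨x, hxD, Set.Ioo_subset_Icc_self hxab, ?_⟩
  rw [← Real.dist_eq, dist_comm]
  exact hdist.le

/-- Vulnerability of non-infinity measurement errors: for every `ε > 0`, `k ∈ [1,∞)` and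
`δ > 0` there is a strictly positive policy `π` whose `k`-measurement KL error to a
greedy-optimal policy `φ` is at most `δ` and whose naturally suboptimal set has measure at
most `δ`, yet every state of `[-1/2,1/2]` has an `ε`-close adversarial state flipping the
greedy action away from the optimal one. -/
theorem stmt18 (φ : ℝ → Bool → ℝ)
    (hφm : ∀ a, Measurable (fun s => φ s a))
    (hφprob : ∀ s ∈ Set.Icc (-(1:ℝ)/2) (1/2), (∀ a, 0 ≤ φ s a) ∧ ∑ a, φ s a = 1)
    (hφopt : ∀ s ∈ Set.Icc (-(1:ℝ)/2) (1/2), φ s (!astar s) < φ s (astar s)) :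
    ∀ ε > (0:ℝ), ∀ k : ℝ, 1 ≤ k → ∀ δ > (0:ℝ),
      ∃ pol : ℝ → Bool → ℝ,
        (∀ a, Measurable (fun s => pol s a)) ∧
        (∀ s ∈ Set.Icc (-(1:ℝ)/2) (1/2), (∀ a, 0 < pol s a) ∧ ∑ a, pol s a = 1) ∧
        (∫ s in Set.Icc (-(1:ℝ)/2) (1/2),
            (∑ a, φ s a * Real.log (φ s a / pol s a)) ^ k) ^ (1/k) ≤ δ ∧
        volume {s ∈ Set.Icc (-(1:ℝ)/2) (1/2) |
            ¬ ∀ a, a ≠ astar s → pol s a < pol s (astar s)} ≤ ENNReal.ofReal δ ∧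
        ∀ s ∈ Set.Icc (-(1:ℝ)/2) (1/2),
          ∃ sν ∈ Set.Icc (-(1:ℝ)/2) (1/2), |sν - s| ≤ ε ∧
            ∃ a, (∀ a', pol sν a' ≤ pol sν a) ∧ a ≠ astar s := by
  intro ε hε k hk δ hδ
  have hQ : (Set.range ((↑) : ℚ → ℝ)).Countable := Set.countable_range _
  have hprob : ∀ s ∈ Set.Icc (-(1:ℝ)/2) (1/2),
      (∀ a, 0 < smoothedPolicy δ φ s a) ∧ ∑ a, smoothedPolicy δ φ s a = 1 := fun s hs =>
    ⟨mixUniform_pos (hφprob s hs).1 rationalsUniformWeight_nonneg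
      (rationalsUniformWeight_lt_one hδ), sum_mixUniform (hφprob s hs).2⟩
  refine ⟨smoothedPolicy δ φ, measurable_smoothedPolicy hφm, hprob, ?_, ?_, ?_⟩
  · have := isProbabilityMeasure_restrict_Icc (a := -(1:ℝ)/2) (b := 1/2) (by norm_num)
    have hI := ae_restrict_mem (μ := volume) (measurableSet_Icc (a := -(1:ℝ)/2) (b := 1/2))
    refine rpow_integral_rpow_le (by linarith) ?_ ?_
    · filter_upwards [hI] with s hs
      exact sum_mul_log_div_nonneg (hφprob s hs).1 (hprob s hs).1
        ((hprob s hs).2.trans (hφprob s hs).2.symm).le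
    · filter_upwards [hI, ae_restrict_of_ae (hQ.ae_notMem volume)] with s hs hsQ
      exact sum_mul_log_div_smoothedPolicy_le hδ.le (hφprob s hs).1 (hφprob s hs).2 hsQ
  · refine (measure_mono ?_).trans ((hQ.measure_zero volume).trans_le zero_le)
    rintro s ⟨hs, hbad⟩
    by_contra hsQ
    refine hbad fun a ha => ?_
    rw [Bool.eq_not_iff.2 ha]
    exact smoothedPolicy_lt_smoothedPolicy hsQ (hφopt s hs)
  · intro s hs
    obtain ⟨_, ⟨q, rfl⟩, hqI, hqs⟩ :=
      Rat.denseRange_cast.exists_mem_Icc_abs_sub_le (by norm_num) hs hε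
    exact ⟨q, hqI, hqs, !astar s, fun a => (smoothedPolicy_rat δ φ q a _).le, Bool.not_ne_self _⟩
end
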